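/- arXiv:math/0703236 — 2 statements merged into one kernel-verified Lean document; each statement's English description precedes it below -/
import Mathlib

section
/- The function g*(t) = sup_x |r₁e^{−ikx} + r₂e^{it} + r₃e^{ilx}| / |r₁ + r₂e^{it} + r₃| is an increasing function of t on [0, π/(k+l)]. If kr₁ = lr₃ it is constantly equal to 1; otherwise it is strictly increasing on [0, π/(k+l)]. -/
open Real

private lemma cos_shift (N : ℕ) (hN : 0 < N) (M : ℤ) (a : ℝ) (ha : 0 ≤ a)
    (hac : a ≤ π / N) : Real.cos (a + 2*π*M/N) ≤ Real.cos a := by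
  have hNR : (0:ℝ) < N := by exact_mod_cast hN
  have hπ := Real.pi_pos
  set j : ℤ := M % N with hj
  have hj0 : 0 ≤ j := Int.emod_nonneg M (by exact_mod_cast hN.ne')
  have hjN : j < N := Int.emod_lt_of_pos M (by exact_mod_cast hN)
  have hdecomp : (M:ℝ) = (N:ℝ) * ((M / (N:ℤ) : ℤ):ℝ) + (j:ℝ) := by
    have h := Int.mul_ediv_add_emod M N
    have h2 : (((N:ℤ) * (M / (N:ℤ)) + M % (N:ℤ) : ℤ) : ℝ) = (M:ℝ) := by exact_mod_cast congrArg (fun z : ℤ => (z:ℝ)) h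
    push_cast at h2
    linarith [h2]
  have hang : a + 2*π*M/N = (a + 2*π*j/N) + ((M / (N:ℤ) : ℤ):ℝ) * (2*π) := by
    rw [hdecomp]; field_simp; ring
  rw [hang, Real.cos_add_int_mul_two_pi]
  rcases hj0.eq_or_lt with h0 | hpos
  · rw [← h0]; norm_num
  · have hj1 : (1:ℝ) ≤ (j:ℝ) := by exact_mod_cast hpos
    have hjN1 : (j:ℝ) ≤ (N:ℝ) - 1 := by
      have : j ≤ (N:ℤ) - 1 := by omega
      calc (j:ℝ) ≤ (((N:ℤ) - 1 : ℤ):ℝ) := by exact_mod_cast this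
        _ = (N:ℝ) - 1 := by push_cast; ring
    -- helper identities to let linarith relate the division atoms
    have e1 : 2*π*j/N = 2*π/N*j := by ring
    have e2 : 2*π/N = 2*(π/N) := by ring
    have e3 : 0 < π/N := by positivity
    have hx1 : 2*(π/N) ≤ a + 2*π*j/N := by
      rw [e1, e2]
      nlinarith [e3, hj1, ha]
    have hx2 : a + 2*π*j/N ≤ 2*π - π/N := by
      rw [e1, e2]
      have : 2*(π/N)*j ≤ 2*(π/N)*((N:ℝ)-1) := by nlinarith [e3, hjN1]
      have e4 : 2*(π/N)*((N:ℝ)-1) = 2*π - 2*(π/N) := by field_simp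
      nlinarith [hac, e3]
    have hπN : π/N ≤ π := by
      rw [div_le_iff₀ hNR]
      nlinarith [(by exact_mod_cast hN : (1:ℝ) ≤ N)]
    by_cases hle : a + 2*π*j/N ≤ π
    · exact Real.cos_le_cos_of_nonneg_of_le_pi ha hle (by nlinarith [hac, hx1, e3])
    · push_neg at hle
      rw [show Real.cos (a + 2*π*j/N) = Real.cos (2*π - (a + 2*π*j/N)) from (Real.cos_two_pi_sub _).symm]
      exact Real.cos_le_cos_of_nonneg_of_le_pi ha (by linarith) (by linarith [hac])



set_option maxHeartbeats 800000 in
private lemma claimB (k l : ℕ) (hk : 0 < k) (hl : 0 < l) (a : ℝ) (ha : 0 ≤ a)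
    (hac : a ≤ π / ((k:ℝ)+l)) (θ : ℝ) :
    (l:ℝ) * Real.cos (a + k*θ) + (k:ℝ) * Real.cos (a - l*θ) ≤ ((k:ℝ)+l) * Real.cos a := by
  have hπ := Real.pi_pos
  have hk1 : (1:ℝ) ≤ k := by exact_mod_cast hk
  have hl1 : (1:ℝ) ≤ l := by exact_mod_cast hl
  have hN2 : (2:ℝ) ≤ (k:ℝ)+l := by linarith
  have hNpos : (0:ℝ) < (k:ℝ)+l := by linarith
  set h : ℝ → ℝ := fun θ => (l:ℝ) * Real.cos (a + k*θ) + (k:ℝ) * Real.cos (a - l*θ) with hh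
  have hper : Function.Periodic h (2*π) := by
    intro θ
    simp only [hh]
    have e1 : a + (k:ℝ)*(θ + 2*π) = (a + (k:ℝ)*θ) + ((k:ℤ):ℝ) * (2*π) := by push_cast; ring
    have e2 : a - (l:ℝ)*(θ + 2*π) = (a - (l:ℝ)*θ) - ((l:ℤ):ℝ) * (2*π) := by push_cast; ring
    rw [e1, e2, Real.cos_add_int_mul_two_pi, Real.cos_sub_int_mul_two_pi]
  have hcont : Continuous h := by
    simp only [hh]
    fun_prop
  obtain ⟨θ₀, hθ₀mem, hmax⟩ := (isCompact_Icc : IsCompact (Set.Icc (0:ℝ) (2*π))).exists_isMaxOn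
    (Set.nonempty_Icc.2 (by linarith)) hcont.continuousOn
  have hglob : ∀ θ, h θ ≤ h θ₀ := by
    intro θ
    obtain ⟨y, hy, hyx⟩ := hper.exists_mem_Ico₀ (by linarith) θ
    rw [hyx]
    exact hmax (Set.mem_Icc.2 ⟨hy.1, hy.2.le⟩)
  refine le_trans (hglob θ) ?_
  -- derivative at θ₀ is zero
  have d1 : HasDerivAt (fun θ : ℝ => a + (k:ℝ)*θ) (k:ℝ) θ₀ := by
    simpa using ((hasDerivAt_id θ₀).const_mul (k:ℝ)).const_add a
  have d2 : HasDerivAt (fun θ : ℝ => a - (l:ℝ)*θ) (-(l:ℝ)) θ₀ := by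
    simpa using ((hasDerivAt_id θ₀).const_mul (l:ℝ)).const_sub a
  have hd : HasDerivAt h ((l:ℝ) * (-Real.sin (a + (k:ℝ)*θ₀) * (k:ℝ)) + (k:ℝ) * (-Real.sin (a - (l:ℝ)*θ₀) * (-(l:ℝ)))) θ₀ :=
    (d1.cos.const_mul (l:ℝ)).add (d2.cos.const_mul (k:ℝ))
  have hloc : IsLocalMax h θ₀ := Filter.Eventually.of_forall hglob
  have hzero := hloc.hasDerivAt_eq_zero hd
  have h2 : (k:ℝ)*l * Real.sin (a + (k:ℝ)*θ₀) = (k:ℝ)*l * Real.sin (a - (l:ℝ)*θ₀) := by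
    linear_combination (-1 : ℝ) * hzero
  have hsin : Real.sin (a + (k:ℝ)*θ₀) = Real.sin (a - (l:ℝ)*θ₀) :=
    mul_left_cancel₀ (by positivity) h2
  have e := Real.sin_sub_sin (a + (k:ℝ)*θ₀) (a - (l:ℝ)*θ₀)
  rw [hsin, sub_self] at e
  rw [show (a + (k:ℝ)*θ₀ - (a - (l:ℝ)*θ₀))/2 = ((k:ℝ)+l)*θ₀/2 from by ring,
      show (a + (k:ℝ)*θ₀ + (a - (l:ℝ)*θ₀))/2 = a + ((k:ℝ)-l)*θ₀/2 from by ring] at e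
  rcases mul_eq_zero.1 e.symm with e' | hcosγ
  · rcases mul_eq_zero.1 e' with e'' | hsinδ
    · norm_num at e''
    · -- Branch 1 : θ₀ = 2nπ/(k+l)
      obtain ⟨n, hn⟩ := Real.sin_eq_zero_iff.1 hsinδ
      have hθ : θ₀ = 2*(n:ℝ)*π/((k:ℝ)+l) := by
        field_simp at hn ⊢
        linarith
      have eA : a + (k:ℝ)*θ₀ = a + 2*π*(((k:ℤ)*n : ℤ):ℝ)/((k+l : ℕ):ℝ) := by
        rw [hθ]; push_cast; field_simp
      have eB : a - (l:ℝ)*θ₀ = (a + 2*π*(((k:ℤ)*n : ℤ):ℝ)/((k+l : ℕ):ℝ)) - (n:ℤ)*(2*π) := by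
        rw [hθ]; push_cast; field_simp; ring
      have hcs := cos_shift (k+l) (by omega) ((k:ℤ)*n) a ha (by push_cast; exact hac)
      simp only [hh]
      rw [eA, eB, Real.cos_sub_int_mul_two_pi]
      have : ((l:ℝ) + (k:ℝ)) * Real.cos (a + 2*π*(((k:ℤ)*n : ℤ):ℝ)/((k+l : ℕ):ℝ)) ≤ ((k:ℝ)+l) * Real.cos a := by
        have := mul_le_mul_of_nonneg_left hcs (le_of_lt hNpos)
        push_cast at this ⊢
        linarith
      linarith [this]
  · -- Branch 2 : cos γ = 0
    set γ := a + ((k:ℝ)-l)*θ₀/2 with hγ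
    set B := a - (l:ℝ)*θ₀ with hB
    have hAB : a + (k:ℝ)*θ₀ = 2*γ - B := by rw [hγ, hB]; ring
    have hcosA : Real.cos (a + (k:ℝ)*θ₀) = -Real.cos B := by
      rw [hAB, show (2*γ - B) = 2*γ - B from rfl, Real.cos_sub, Real.cos_two_mul, Real.sin_two_mul, hcosγ]
      ring
    simp only [hh]
    rw [hcosA, ← hB]
    -- goal : l * (-cos B) + k * cos B ≤ (k+l) cos a
    have hbound : ((k:ℝ)-l) * Real.cos B ≤ |(k:ℝ)-l| := by
      calc ((k:ℝ)-l) * Real.cos B ≤ |((k:ℝ)-l) * Real.cos B| := le_abs_self _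
        _ = |(k:ℝ)-l| * |Real.cos B| := abs_mul _ _
        _ ≤ |(k:ℝ)-l| * 1 := by
            apply mul_le_mul_of_nonneg_left (Real.abs_cos_le_one B) (abs_nonneg _)
        _ = |(k:ℝ)-l| := mul_one _
    have hcosa0 : 0 ≤ Real.cos a := by
      apply Real.cos_nonneg_of_mem_Icc
      constructor
      · linarith
      · have : π/((k:ℝ)+l) ≤ π/2 := by
          rw [div_le_div_iff₀ hNpos (by norm_num)]
          nlinarith
        linarith
    by_cases hkl : k = l
    · subst hkl
      have e0 : (k:ℝ) * -Real.cos B + (k:ℝ) * Real.cos B = 0 := by ring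
      rw [e0]
      exact mul_nonneg (by positivity) hcosa0
    · -- k ≠ l hence k+l ≥ 3
      have hN3 : (3:ℝ) ≤ (k:ℝ)+l := by
        have : 3 ≤ k + l := by omega
        exact_mod_cast this
      have habs : |(k:ℝ)-l| ≤ ((k:ℝ)+l) - 2 := by
        rw [abs_le]; constructor <;> linarith
      have hπsq : π^2 ≤ 4*((k:ℝ)+l) := by nlinarith [Real.pi_lt_d2, Real.pi_pos]
      have hcoslb : 1 - (π/((k:ℝ)+l))^2/2 ≤ Real.cos (π/((k:ℝ)+l)) := Real.one_sub_sq_div_two_le_cos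
      have hcc : Real.cos (π/((k:ℝ)+l)) ≤ Real.cos a := by
        apply Real.cos_le_cos_of_nonneg_of_le_pi ha ?_ hac
        rw [div_le_iff₀ hNpos]; nlinarith
      have key2 : ((k:ℝ)+l) - 2 ≤ ((k:ℝ)+l) * Real.cos a := by
        have hexp : (π/((k:ℝ)+l))^2 = π^2/((k:ℝ)+l)^2 := by rw [div_pow]
        rw [hexp] at hcoslb
        have hmul := mul_le_mul_of_nonneg_left (le_trans hcoslb hcc) (le_of_lt hNpos)
        have e5 : ((k:ℝ)+l) * (1 - π^2/((k:ℝ)+l)^2/2) = ((k:ℝ)+l) - π^2/(2*((k:ℝ)+l)) := by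
          field_simp
        rw [e5] at hmul
        have h6 : π^2/(2*((k:ℝ)+l)) ≤ 2 := by
          rw [div_le_iff₀ (by positivity)]; linarith
        linarith
      linarith [hbound, habs, key2]


private lemma trin_sq (r₁ r₂ r₃ α β γ : ℝ) :
    ‖(r₁ : ℂ) * Complex.exp (Complex.I * (α : ℂ)) +
      (r₂ : ℂ) * Complex.exp (Complex.I * (β : ℂ)) +
      (r₃ : ℂ) * Complex.exp (Complex.I * (γ : ℂ))‖ ^ 2 =
    r₁^2 + r₂^2 + r₃^2 + 2*r₁*r₂ * Real.cos (α - β) + 2*r₁*r₃ * Real.cos (α - γ) +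
      2*r₂*r₃ * Real.cos (β - γ) := by
  have e : ∀ x : ℝ, Complex.exp (Complex.I * (x : ℝ)) =
      (Real.cos x : ℂ) + (Real.sin x : ℂ) * Complex.I := by
    intro x
    rw [mul_comm, Complex.exp_mul_I, Complex.ofReal_cos, Complex.ofReal_sin]
  rw [e, e, e, Complex.sq_norm, Complex.normSq_apply]
  simp only [Complex.add_re, Complex.add_im, Complex.mul_re, Complex.mul_im,
    Complex.ofReal_re, Complex.ofReal_im, Complex.I_re, Complex.I_im]
  rw [Real.cos_sub, Real.cos_sub, Real.cos_sub]
  nlinarith [Real.sin_sq_add_cos_sq α, Real.sin_sq_add_cos_sq β, Real.sin_sq_add_cos_sq γ]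

private noncomputable def FF (k l : ℕ) (r₁ r₂ r₃ t x : ℝ) : ℝ :=
  ‖(r₁ : ℂ) * Complex.exp (Complex.I * ((-(k : ℝ) * x : ℝ) : ℂ)) +
     (r₂ : ℂ) * Complex.exp (Complex.I * (t : ℂ)) +
     (r₃ : ℂ) * Complex.exp (Complex.I * ((l * x : ℝ) : ℂ))‖

private noncomputable def Hf (k l : ℕ) (r₁ r₂ r₃ t x : ℝ) : ℝ :=
  r₁^2 + r₂^2 + r₃^2 + 2*r₁*r₂*Real.cos (t + (k:ℝ)*x) + 2*r₂*r₃*Real.cos (t - (l:ℝ)*x)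
    + 2*r₁*r₃*Real.cos (((k:ℝ)+(l:ℝ))*x)

private lemma FF_nonneg (k l : ℕ) (r₁ r₂ r₃ t x : ℝ) : 0 ≤ FF k l r₁ r₂ r₃ t x :=
  norm_nonneg _

private lemma FF_sq (k l : ℕ) (r₁ r₂ r₃ t x : ℝ) :
    FF k l r₁ r₂ r₃ t x ^ 2 = Hf k l r₁ r₂ r₃ t x := by
  unfold FF Hf
  rw [trin_sq]
  rw [show -(k:ℝ)*x - t = -(t + (k:ℝ)*x) from by ring,
      show -(k:ℝ)*x - (l:ℝ)*x = -((((k:ℝ))+(l:ℝ))*x) from by ring,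
      Real.cos_neg, Real.cos_neg]
  ring

private lemma Hf_zero (k l : ℕ) (r₁ r₂ r₃ t : ℝ) :
    Hf k l r₁ r₂ r₃ t 0 = r₁^2 + r₂^2 + r₃^2 + 2*r₁*r₂*Real.cos t + 2*r₂*r₃*Real.cos t
      + 2*r₁*r₃ := by
  unfold Hf
  norm_num

private lemma FF_bdd (k l : ℕ) (r₁ r₂ r₃ t : ℝ) :
    BddAbove (Set.range (FF k l r₁ r₂ r₃ t)) := by
  refine ⟨|r₁|+|r₂|+|r₃|, ?_⟩
  rintro y ⟨x, rfl⟩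
  unfold FF
  have h1 : ∀ c : ℝ, ‖Complex.exp (Complex.I * (c:ℂ))‖ = 1 := fun c => by
    rw [mul_comm, Complex.norm_exp_ofReal_mul_I]
  refine le_trans (norm_add_le _ _) ?_
  refine le_trans (add_le_add_left (norm_add_le _ _) _) ?_
  rw [norm_mul, norm_mul, norm_mul, h1, h1, h1, Complex.norm_real, Complex.norm_real,
    Complex.norm_real]
  simp

private lemma FF_zero (k l : ℕ) (r₁ r₂ r₃ t : ℝ) :
    FF k l r₁ r₂ r₃ t 0 =
      ‖(r₁:ℂ) + (r₂:ℂ) * Complex.exp (Complex.I * (t:ℂ)) + (r₃:ℂ)‖ := by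
  unfold FF
  norm_num

private lemma FF_pos (k l : ℕ) (r₁ r₂ r₃ t : ℝ) (hr₁ : 0 < r₁) (hr₂ : 0 < r₂) (hr₃ : 0 < r₃)
    (htc : 0 ≤ Real.cos t) : 0 < FF k l r₁ r₂ r₃ t 0 := by
  rw [FF_zero]
  have hre : ((r₁:ℂ) + (r₂:ℂ) * Complex.exp (Complex.I * (t:ℂ)) + (r₃:ℂ)).re
      = r₁ + r₂ * Real.cos t + r₃ := by
    rw [mul_comm Complex.I ((t:ℝ):ℂ)]
    simp [Complex.add_re, Complex.mul_re, Complex.exp_ofReal_mul_I_re,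
      Complex.exp_ofReal_mul_I_im]
  have := Complex.re_le_norm ((r₁:ℂ) + (r₂:ℂ) * Complex.exp (Complex.I * (t:ℂ)) + (r₃:ℂ))
  rw [hre] at this
  nlinarith [mul_nonneg hr₂.le htc]




-- part (b) pointwise bound
lemma Hf_le_of_eq (k l : ℕ) (hk : 0 < k) (hl : 0 < l) (r₁ r₂ r₃ : ℝ)
    (hr₁ : 0 < r₁) (hr₂ : 0 < r₂) (hr₃ : 0 < r₃) (heq : (k:ℝ)*r₁ = (l:ℝ)*r₃)
    (t : ℝ) (ht : 0 ≤ t) (htc : t ≤ π/((k:ℝ)+l)) (x : ℝ) :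
    Hf k l r₁ r₂ r₃ t x ≤ Hf k l r₁ r₂ r₃ t 0 := by
  have hl0 : (0:ℝ) < l := by exact_mod_cast hl
  have hk0 : (0:ℝ) < k := by exact_mod_cast hk
  set s := r₁ / (l:ℝ) with hs
  have hspos : 0 < s := by positivity
  have h1 : r₁ = s * l := by rw [hs]; field_simp
  have h3 : r₃ = s * k := by rw [hs]; field_simp; nlinarith [heq]
  have hB := claimB k l hk hl t ht htc x
  have hcos : Real.cos (((k:ℝ)+l)*x) ≤ 1 := Real.cos_le_one _
  have hmul : 2*s*r₂ * ((l:ℝ)*Real.cos (t + (k:ℝ)*x) + (k:ℝ)*Real.cos (t - (l:ℝ)*x))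
      ≤ 2*s*r₂*(((k:ℝ)+l)*Real.cos t) := mul_le_mul_of_nonneg_left hB (by positivity)
  have hmul2 : 0 ≤ 2*(s*l)*(s*k)*(1 - Real.cos (((k:ℝ)+l)*x)) :=
    mul_nonneg (by positivity) (by linarith)
  unfold Hf
  norm_num
  rw [h1, h3]
  nlinarith [hmul, hmul2]

-- the key comparison step
lemma step (k l : ℕ) (hk : 0 < k) (hl : 0 < l) (r₁ r₂ r₃ : ℝ)
    (hr₁ : 0 < r₁) (hr₂ : 0 < r₂) (hr₃ : 0 < r₃) (a b x : ℝ)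
    (ha : 0 ≤ a) (hab : a ≤ b) (hb : b ≤ π/((k:ℝ)+l))
    (hgood : Hf k l r₁ r₂ r₃ a 0 < Hf k l r₁ r₂ r₃ a x) :
    Hf k l r₁ r₂ r₃ a x + Hf k l r₁ r₂ r₃ b 0 - Hf k l r₁ r₂ r₃ a 0
      ≤ Hf k l r₁ r₂ r₃ b x := by
  have hπ := Real.pi_pos
  have hk1 : (1:ℝ) ≤ k := by exact_mod_cast hk
  have hl1 : (1:ℝ) ≤ l := by exact_mod_cast hl
  have hNpos : (0:ℝ) < (k:ℝ)+l := by linarith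
  have hb2 : b ≤ π/2 := by
    refine le_trans hb ?_
    rw [div_le_div_iff₀ hNpos (by norm_num)]
    nlinarith
  -- extract P > 0
  have hcos1 : Real.cos (((k:ℝ)+(l:ℝ))*x) ≤ 1 := Real.cos_le_one _
  rw [Hf] at hgood
  norm_num at hgood
  rw [Hf] at hgood
  have hP : (r₁+r₃) * Real.cos a < r₁ * Real.cos (a + (k:ℝ)*x) + r₃ * Real.cos (a - (l:ℝ)*x) := by
    nlinarith [hgood, hcos1, mul_pos hr₁ hr₃]
  have hapos : 0 < a := by
    rcases ha.eq_or_lt with h | h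
    · exfalso
      rw [← h] at hP
      nlinarith [Real.cos_le_one (0 + (k:ℝ)*x), Real.cos_le_one (0 - (l:ℝ)*x), Real.cos_zero]
    · exact h
  have hsina : 0 < Real.sin a := Real.sin_pos_of_pos_of_lt_pi hapos (by linarith)
  have hcosa : 0 ≤ Real.cos a := Real.cos_nonneg_of_mem_Icc ⟨by linarith, by linarith⟩
  have hple : r₁ * Real.cos ((k:ℝ)*x) + r₃ * Real.cos ((l:ℝ)*x) ≤ r₁ + r₃ := by
    nlinarith [Real.cos_le_one ((k:ℝ)*x), Real.cos_le_one ((l:ℝ)*x)]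
  have hq : r₁ * Real.sin ((k:ℝ)*x) - r₃ * Real.sin ((l:ℝ)*x) < 0 := by
    rw [Real.cos_add, Real.cos_sub] at hP
    nlinarith [hP, hple, hcosa, hsina, mul_nonneg hcosa (sub_nonneg.2 hple)]
  set m := (a+b)/2 with hm
  have hm1 : 0 ≤ Real.sin m := Real.sin_nonneg_of_nonneg_of_le_pi (by rw [hm]; linarith) (by rw [hm]; linarith)
  have hm2 : 0 ≤ Real.cos m := Real.cos_nonneg_of_mem_Icc ⟨by rw [hm]; linarith, by rw [hm]; linarith⟩
  have hS : r₁ * Real.sin (m + (k:ℝ)*x) + r₃ * Real.sin (m - (l:ℝ)*x) ≤ (r₁+r₃) * Real.sin m := by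
    rw [Real.sin_add, Real.sin_sub]
    linarith [mul_nonneg hm1 (sub_nonneg.2 hple), mul_nonneg hm2 (by linarith [hq] : (0:ℝ) ≤ r₃ * Real.sin ((l:ℝ)*x) - r₁ * Real.sin ((k:ℝ)*x))]
  have c1 := Real.cos_sub_cos (b + (k:ℝ)*x) (a + (k:ℝ)*x)
  rw [show (b + (k:ℝ)*x + (a + (k:ℝ)*x))/2 = m + (k:ℝ)*x from by rw [hm]; ring,
      show (b + (k:ℝ)*x - (a + (k:ℝ)*x))/2 = (b-a)/2 from by ring] at c1
  have c2 := Real.cos_sub_cos (b - (l:ℝ)*x) (a - (l:ℝ)*x)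
  rw [show (b - (l:ℝ)*x + (a - (l:ℝ)*x))/2 = m - (l:ℝ)*x from by rw [hm]; ring,
      show (b - (l:ℝ)*x - (a - (l:ℝ)*x))/2 = (b-a)/2 from by ring] at c2
  have c3 := Real.cos_sub_cos b a
  rw [show (b + a)/2 = m from by rw [hm]; ring] at c3
  have hδ : 0 ≤ Real.sin ((b-a)/2) := Real.sin_nonneg_of_nonneg_of_le_pi (by linarith) (by linarith)
  have expand : Hf k l r₁ r₂ r₃ b x - Hf k l r₁ r₂ r₃ a x - (Hf k l r₁ r₂ r₃ b 0 - Hf k l r₁ r₂ r₃ a 0)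
      = 2*r₂*Real.sin ((b-a)/2) * 2 * ((r₁+r₃)*Real.sin m - (r₁*Real.sin (m + (k:ℝ)*x) + r₃*Real.sin (m - (l:ℝ)*x))) := by
    simp only [Hf]
    norm_num
    linear_combination (2*r₁*r₂)*c1 + (2*r₂*r₃)*c2 - (2*r₁*r₂ + 2*r₂*r₃)*c3
  have hc : (0:ℝ) ≤ 2*r₂*Real.sin ((b-a)/2)*2 :=
    mul_nonneg (mul_nonneg (mul_nonneg (by norm_num) hr₂.le) hδ) (by norm_num)
  have hpos : 0 ≤ Hf k l r₁ r₂ r₃ b x - Hf k l r₁ r₂ r₃ a x - (Hf k l r₁ r₂ r₃ b 0 - Hf k l r₁ r₂ r₃ a 0) := by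
    rw [expand]
    exact mul_nonneg hc (by linarith [hS])
  linarith [hpos]



lemma pos_of_deriv (w : ℝ → ℝ) (h0 : w 0 = 0) (d : ℝ) (hw : HasDerivAt w d 0)
    (hd : d ≠ 0) : ∃ θ, 0 < w θ := by
  have H := hasDerivAt_iff_tendsto_slope.1 hw
  rcases hd.lt_or_gt with hneg | hpos
  · have H2 : Filter.Tendsto (slope w 0) (nhdsWithin 0 (Set.Iio 0)) (nhds d) :=
      H.mono_left (nhdsWithin_mono 0 (fun y hy => ne_of_lt hy))
    have hev : ∀ᶠ θ in nhdsWithin 0 (Set.Iio 0), slope w 0 θ < d/2 :=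
      H2.eventually (gt_mem_nhds (by linarith))
    obtain ⟨θ, hslope, hθ⟩ := (hev.and self_mem_nhdsWithin).exists
    refine ⟨θ, ?_⟩
    have hθ0 : θ < 0 := hθ
    rw [slope_def_field] at hslope
    simp only [h0, sub_zero] at hslope
    have := (div_lt_iff_of_neg hθ0).1 hslope
    nlinarith
  · have H2 : Filter.Tendsto (slope w 0) (nhdsWithin 0 (Set.Ioi 0)) (nhds d) :=
      H.mono_left (nhdsWithin_mono 0 (fun y hy => ne_of_gt hy))
    have hev : ∀ᶠ θ in nhdsWithin 0 (Set.Ioi 0), d/2 < slope w 0 θ :=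
      H2.eventually (lt_mem_nhds (by linarith))
    obtain ⟨θ, hslope, hθ⟩ := (hev.and self_mem_nhdsWithin).exists
    refine ⟨θ, ?_⟩
    have hθ0 : (0:ℝ) < θ := hθ
    rw [slope_def_field] at hslope
    simp only [h0, sub_zero] at hslope
    have := (lt_div_iff₀ hθ0).1 hslope
    nlinarith

lemma exists_good (k l : ℕ) (r₁ r₂ r₃ : ℝ) (hr₂ : 0 < r₂) (t : ℝ)
    (ht : 0 < t) (htπ : t < π) (hne : (k:ℝ)*r₁ ≠ (l:ℝ)*r₃) :
    ∃ x, Hf k l r₁ r₂ r₃ t 0 < Hf k l r₁ r₂ r₃ t x := by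
  have hsin : 0 < Real.sin t := Real.sin_pos_of_pos_of_lt_pi ht htπ
  have d1 : HasDerivAt (fun θ : ℝ => t + (k:ℝ)*θ) (k:ℝ) 0 := by
    simpa using ((hasDerivAt_id (0:ℝ)).const_mul (k:ℝ)).const_add t
  have d2 : HasDerivAt (fun θ : ℝ => t - (l:ℝ)*θ) (-(l:ℝ)) 0 := by
    simpa using ((hasDerivAt_id (0:ℝ)).const_mul (l:ℝ)).const_sub t
  have d3 : HasDerivAt (fun θ : ℝ => ((k:ℝ)+(l:ℝ))*θ) ((k:ℝ)+(l:ℝ)) 0 := by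
    simpa using (hasDerivAt_id (0:ℝ)).const_mul ((k:ℝ)+(l:ℝ))
  have base := (((d1.cos.const_mul (2*r₁*r₂)).const_add (r₁^2+r₂^2+r₃^2)).add
      (d2.cos.const_mul (2*r₂*r₃))).add (d3.cos.const_mul (2*r₁*r₃))
  have base2 := base.sub_const (Hf k l r₁ r₂ r₃ t 0)
  have hD : 2*r₁*r₂ * (-Real.sin (t + (k:ℝ)*0) * (k:ℝ)) + 2*r₂*r₃ * (-Real.sin (t - (l:ℝ)*0) * (-(l:ℝ)))
      + 2*r₁*r₃ * (-Real.sin (((k:ℝ)+(l:ℝ))*0) * ((k:ℝ)+(l:ℝ)))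
      = 2*r₂*Real.sin t*((l:ℝ)*r₃ - (k:ℝ)*r₁) := by
    norm_num
    ring
  rw [hD] at base2
  have hdne : 2*r₂*Real.sin t*((l:ℝ)*r₃ - (k:ℝ)*r₁) ≠ 0 := by
    have h1 : (l:ℝ)*r₃ - (k:ℝ)*r₁ ≠ 0 := sub_ne_zero.2 (Ne.symm hne)
    have h2 : 2*r₂*Real.sin t ≠ 0 := by positivity
    exact mul_ne_zero h2 h1
  obtain ⟨θ, hθ⟩ := pos_of_deriv (fun θ => Hf k l r₁ r₂ r₃ t θ - Hf k l r₁ r₂ r₃ t 0)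
    (by simp) _ (by exact base2) hdne
  exact ⟨θ, by linarith [hθ]⟩


set_option maxHeartbeats 1200000 in
theorem stmt17 (k l : ℕ) (hk : 0 < k) (hl : 0 < l) (hkl : Nat.Coprime k l)
    (r₁ r₂ r₃ : ℝ) (hr₁ : 0 < r₁) (hr₂ : 0 < r₂) (hr₃ : 0 < r₃)
    (G : ℝ → ℝ)
    (hG : ∀ t : ℝ, G t =
      (⨆ x : ℝ, Norm.norm
        ((r₁ : ℂ) * Complex.exp (Complex.I * ((-(k : ℝ) * x : ℝ) : ℂ)) +
         (r₂ : ℂ) * Complex.exp (Complex.I * (t : ℂ)) +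
         (r₃ : ℂ) * Complex.exp (Complex.I * ((l * x : ℝ) : ℂ)))) /
      Norm.norm ((r₁ : ℂ) + (r₂ : ℂ) * Complex.exp (Complex.I * (t : ℂ)) + (r₃ : ℂ))) :
    -- G is increasing on [0, π/(k+l)]
    MonotoneOn G (Set.Icc 0 (π / (k + l))) ∧
    -- if kr₁ = lr₃, G is constantly 1 on [0, π/(k+l)]
    (k * r₁ = l * r₃ → ∀ t ∈ Set.Icc 0 (π / (k + l)), G t = 1) ∧
    -- otherwise G is strictly increasing on [0, π/(k+l)]
    (k * r₁ ≠ l * r₃ → StrictMonoOn G (Set.Icc 0 (π / (k + l)))) := by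
  have hπ := Real.pi_pos
  have hk1 : (1:ℝ) ≤ k := by exact_mod_cast hk
  have hl1 : (1:ℝ) ≤ l := by exact_mod_cast hl
  have hNpos : (0:ℝ) < (k:ℝ)+l := by linarith
  have hc2 : π/((k:ℝ)+l) ≤ π/2 := by
    rw [div_le_div_iff₀ hNpos (by norm_num)]
    nlinarith
  have hG' : ∀ t, G t = (⨆ x, FF k l r₁ r₂ r₃ t x) / FF k l r₁ r₂ r₃ t 0 := by
    intro t
    rw [hG t, FF_zero]
    rfl
  have hcosmem : ∀ t : ℝ, t ∈ Set.Icc 0 (π / ((k:ℝ) + l)) → 0 ≤ Real.cos t := by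
    intro t ht
    exact Real.cos_nonneg_of_mem_Icc ⟨by linarith [ht.1], by linarith [ht.2, hc2]⟩
  have hDpos : ∀ t : ℝ, t ∈ Set.Icc 0 (π / ((k:ℝ) + l)) → 0 < FF k l r₁ r₂ r₃ t 0 :=
    fun t ht => FF_pos k l r₁ r₂ r₃ t hr₁ hr₂ hr₃ (hcosmem t ht)
  have hSnn : ∀ t : ℝ, 0 ≤ ⨆ x, FF k l r₁ r₂ r₃ t x :=
    fun t => le_trans (FF_nonneg k l r₁ r₂ r₃ t 0) (le_ciSup (FF_bdd k l r₁ r₂ r₃ t) 0)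
  have h0a_nn : ∀ t x : ℝ, 0 ≤ Hf k l r₁ r₂ r₃ t x := by
    intro t x
    rw [← FF_sq]
    positivity
  -- ====== monotonicity ======
  have hmono : MonotoneOn G (Set.Icc 0 (π / ((k:ℝ) + l))) := by
    intro a ha b hb hab
    have hDa := hDpos a ha
    have hDb := hDpos b hb
    rw [hG' a, hG' b, div_le_div_iff₀ hDa hDb]
    have hψ : Hf k l r₁ r₂ r₃ b 0 ≤ Hf k l r₁ r₂ r₃ a 0 := by
      rw [Hf_zero, Hf_zero]
      have hcc : Real.cos b ≤ Real.cos a :=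
        Real.cos_le_cos_of_nonneg_of_le_pi ha.1 (by linarith [hb.2, hc2]) hab
      nlinarith [mul_nonneg (mul_nonneg hr₁.le hr₂.le) (sub_nonneg.2 hcc),
        mul_nonneg (mul_nonneg hr₂.le hr₃.le) (sub_nonneg.2 hcc)]
    have key : ∀ x, FF k l r₁ r₂ r₃ a x * FF k l r₁ r₂ r₃ b 0
        ≤ (⨆ x, FF k l r₁ r₂ r₃ b x) * FF k l r₁ r₂ r₃ a 0 := by
      intro x
      by_cases hcase : FF k l r₁ r₂ r₃ a x ≤ FF k l r₁ r₂ r₃ a 0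
      · calc FF k l r₁ r₂ r₃ a x * FF k l r₁ r₂ r₃ b 0
            ≤ FF k l r₁ r₂ r₃ a 0 * FF k l r₁ r₂ r₃ b 0 :=
              mul_le_mul_of_nonneg_right hcase (FF_nonneg k l r₁ r₂ r₃ b 0)
          _ ≤ FF k l r₁ r₂ r₃ a 0 * (⨆ x, FF k l r₁ r₂ r₃ b x) :=
              mul_le_mul_of_nonneg_left (le_ciSup (FF_bdd k l r₁ r₂ r₃ b) 0)
                (FF_nonneg k l r₁ r₂ r₃ a 0)
          _ = (⨆ x, FF k l r₁ r₂ r₃ b x) * FF k l r₁ r₂ r₃ a 0 := mul_comm _ _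
      · push_neg at hcase
        have hHgood : Hf k l r₁ r₂ r₃ a 0 < Hf k l r₁ r₂ r₃ a x := by
          rw [← FF_sq, ← FF_sq]
          exact pow_lt_pow_left₀ hcase (FF_nonneg k l r₁ r₂ r₃ a 0) two_ne_zero
        have hstep := step k l hk hl r₁ r₂ r₃ hr₁ hr₂ hr₃ a b x ha.1 hab hb.2 hHgood
        have hsq : (FF k l r₁ r₂ r₃ a x * FF k l r₁ r₂ r₃ b 0)^2
            ≤ (FF k l r₁ r₂ r₃ b x * FF k l r₁ r₂ r₃ a 0)^2 := by
          rw [mul_pow, mul_pow, FF_sq, FF_sq, FF_sq, FF_sq]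
          nlinarith [mul_le_mul_of_nonneg_right hstep (h0a_nn a 0),
            mul_nonneg (sub_nonneg.2 hHgood.le) (sub_nonneg.2 hψ)]
        have hle : FF k l r₁ r₂ r₃ a x * FF k l r₁ r₂ r₃ b 0
            ≤ FF k l r₁ r₂ r₃ b x * FF k l r₁ r₂ r₃ a 0 :=
          le_of_pow_le_pow_left₀ two_ne_zero
            (mul_nonneg (FF_nonneg k l r₁ r₂ r₃ b x) (FF_nonneg k l r₁ r₂ r₃ a 0)) hsq
        calc FF k l r₁ r₂ r₃ a x * FF k l r₁ r₂ r₃ b 0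
            ≤ FF k l r₁ r₂ r₃ b x * FF k l r₁ r₂ r₃ a 0 := hle
          _ ≤ (⨆ x, FF k l r₁ r₂ r₃ b x) * FF k l r₁ r₂ r₃ a 0 :=
            mul_le_mul_of_nonneg_right (le_ciSup (FF_bdd k l r₁ r₂ r₃ b) x) hDa.le
    have hfin : (⨆ x, FF k l r₁ r₂ r₃ a x)
        ≤ ((⨆ x, FF k l r₁ r₂ r₃ b x) * FF k l r₁ r₂ r₃ a 0) / FF k l r₁ r₂ r₃ b 0 :=
      ciSup_le (fun x => (le_div_iff₀ hDb).2 (key x))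
    calc (⨆ x, FF k l r₁ r₂ r₃ a x) * FF k l r₁ r₂ r₃ b 0
        ≤ (((⨆ x, FF k l r₁ r₂ r₃ b x) * FF k l r₁ r₂ r₃ a 0) / FF k l r₁ r₂ r₃ b 0)
            * FF k l r₁ r₂ r₃ b 0 := mul_le_mul_of_nonneg_right hfin hDb.le
      _ = (⨆ x, FF k l r₁ r₂ r₃ b x) * FF k l r₁ r₂ r₃ a 0 := div_mul_cancel₀ _ hDb.ne'
  refine ⟨hmono, ?_, ?_⟩
  -- ====== constant case ======
  · intro heq t ht
    have hDt := hDpos t ht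
    have hle : ∀ x, FF k l r₁ r₂ r₃ t x ≤ FF k l r₁ r₂ r₃ t 0 := by
      intro x
      apply le_of_pow_le_pow_left₀ two_ne_zero hDt.le
      rw [FF_sq, FF_sq]
      exact Hf_le_of_eq k l hk hl r₁ r₂ r₃ hr₁ hr₂ hr₃ heq t ht.1 ht.2 x
    have hsup : (⨆ x, FF k l r₁ r₂ r₃ t x) = FF k l r₁ r₂ r₃ t 0 :=
      le_antisymm (ciSup_le hle) (le_ciSup (FF_bdd k l r₁ r₂ r₃ t) 0)
    rw [hG' t, hsup, div_self hDt.ne']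
  -- ====== strict case ======
  · intro hne a ha b hb hab
    have hDa := hDpos a ha
    have hDb := hDpos b hb
    have hbpos : 0 < b := lt_of_le_of_lt ha.1 hab
    rw [hG' a, hG' b, div_lt_div_iff₀ hDa hDb]
    obtain ⟨xb, hxb⟩ := exists_good k l r₁ r₂ r₃ hr₂ b hbpos
      (by linarith [hb.2, hc2] : b < π) hne
    have hSb2 : Hf k l r₁ r₂ r₃ b 0 < (⨆ x, FF k l r₁ r₂ r₃ b x)^2 := by
      calc Hf k l r₁ r₂ r₃ b 0 < Hf k l r₁ r₂ r₃ b xb := hxb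
        _ = FF k l r₁ r₂ r₃ b xb ^2 := (FF_sq k l r₁ r₂ r₃ b xb).symm
        _ ≤ (⨆ x, FF k l r₁ r₂ r₃ b x)^2 :=
            pow_le_pow_left₀ (FF_nonneg k l r₁ r₂ r₃ b xb)
              (le_ciSup (FF_bdd k l r₁ r₂ r₃ b) xb) 2
    have hψ : Hf k l r₁ r₂ r₃ b 0 < Hf k l r₁ r₂ r₃ a 0 := by
      rw [Hf_zero, Hf_zero]
      have hcc : Real.cos b < Real.cos a :=
        Real.cos_lt_cos_of_nonneg_of_le_pi ha.1 (by linarith [hb.2, hc2]) hab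
      nlinarith [mul_pos hr₁ hr₂, mul_pos hr₂ hr₃]
    have hK0 : 0 ≤ (⨆ x, FF k l r₁ r₂ r₃ b x)^2 - Hf k l r₁ r₂ r₃ b 0 + Hf k l r₁ r₂ r₃ a 0 := by
      nlinarith [hSb2, h0a_nn a 0]
    have hKx : ∀ x, FF k l r₁ r₂ r₃ a x ≤ Real.sqrt
        ((⨆ x, FF k l r₁ r₂ r₃ b x)^2 - Hf k l r₁ r₂ r₃ b 0 + Hf k l r₁ r₂ r₃ a 0) := by
      intro x
      rw [← Real.sqrt_sq (FF_nonneg k l r₁ r₂ r₃ a x)]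
      apply Real.sqrt_le_sqrt
      rw [FF_sq]
      by_cases hcase : Hf k l r₁ r₂ r₃ a x ≤ Hf k l r₁ r₂ r₃ a 0
      · linarith [hSb2]
      · push_neg at hcase
        have hstep := step k l hk hl r₁ r₂ r₃ hr₁ hr₂ hr₃ a b x ha.1 hab.le hb.2 hcase
        have hbx : Hf k l r₁ r₂ r₃ b x ≤ (⨆ x, FF k l r₁ r₂ r₃ b x)^2 := by
          rw [← FF_sq]
          exact pow_le_pow_left₀ (FF_nonneg k l r₁ r₂ r₃ b x)
            (le_ciSup (FF_bdd k l r₁ r₂ r₃ b) x) 2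
        linarith
    have hSa2 : (⨆ x, FF k l r₁ r₂ r₃ a x)^2
        ≤ (⨆ x, FF k l r₁ r₂ r₃ b x)^2 - Hf k l r₁ r₂ r₃ b 0 + Hf k l r₁ r₂ r₃ a 0 := by
      have h1 := ciSup_le hKx
      calc (⨆ x, FF k l r₁ r₂ r₃ a x)^2
          ≤ Real.sqrt ((⨆ x, FF k l r₁ r₂ r₃ b x)^2 - Hf k l r₁ r₂ r₃ b 0 + Hf k l r₁ r₂ r₃ a 0)^2 :=
            pow_le_pow_left₀ (hSnn a) h1 2
        _ = _ := Real.sq_sqrt hK0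
    apply lt_of_pow_lt_pow_left₀ 2 (mul_nonneg (hSnn b) hDa.le)
    rw [mul_pow, mul_pow, FF_sq, FF_sq]
    nlinarith [mul_le_mul_of_nonneg_right hSa2 (h0a_nn b 0),
      mul_pos (sub_pos.2 hSb2) (sub_pos.2 hψ)]
end

section
/- For every t ∈ [0, π/(k+l)], sup_x |r₁e^{−ikx} + r₂e^{it} + r₃e^{ilx}| ≥ (r₁ + r₂ + r₃) cos(π/2(k+l)), with equality if and only if r₁ : r₂ : r₃ = l : k+l : k and t = π/(k+l). Consequently the Sidon constant of the set {−k, 0, l} equals sec(π/2(k+l)). -/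
open Real

set_option maxHeartbeats 1000000

private lemma quad_bound (P Q c D : ℝ) (hP : 0 ≤ P) (hQ : 0 ≤ Q) (hc2 : c^2 ≤ 1)
    (hD : 2*c^2 - 1 ≤ D) : ((P+Q)*c)^2 ≤ P^2 + Q^2 + 2*P*Q*D := by
  nlinarith [mul_nonneg (by linarith : (0:ℝ) ≤ 1 - c^2) (sq_nonneg (P-Q)),
    mul_nonneg (mul_nonneg hP hQ) (by linarith : (0:ℝ) ≤ D - (2*c^2-1))]

private lemma sq_le_imp {a b : ℝ} (ha : 0 ≤ a) (hb : 0 ≤ b) (h : a^2 ≤ b^2) : a ≤ b := by nlinarith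

private lemma absSq3 (a b c α β γ : ℝ) :
    Norm.norm ((a:ℂ) * Complex.exp (Complex.I * (α:ℂ)) + (b:ℂ) * Complex.exp (Complex.I * (β:ℂ)) +
      (c:ℂ) * Complex.exp (Complex.I * (γ:ℂ))) ^ 2
      = a^2+b^2+c^2 + 2*a*b*Real.cos (α-β) + 2*a*c*Real.cos (α-γ) + 2*b*c*Real.cos (β-γ) := by
  rw [Complex.sq_norm, Complex.normSq_apply]
  simp only [mul_comm Complex.I, Complex.add_re, Complex.add_im, Complex.mul_re, Complex.mul_im,
    Complex.ofReal_re, Complex.ofReal_im, Complex.exp_ofReal_mul_I_re, Complex.exp_ofReal_mul_I_im,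
    zero_mul, mul_zero, sub_zero, zero_add, add_zero]
  rw [Real.cos_sub, Real.cos_sub, Real.cos_sub]
  linear_combination (a^2)*(Real.sin_sq_add_cos_sq α) + (b^2)*(Real.sin_sq_add_cos_sq β) + (c^2)*(Real.sin_sq_add_cos_sq γ)

private lemma absSq2 (a b α β : ℝ) :
    Norm.norm ((a:ℂ) * Complex.exp (Complex.I * (α:ℂ)) + (b:ℂ) * Complex.exp (Complex.I * (β:ℂ))) ^ 2
      = a^2+b^2 + 2*a*b*Real.cos (α-β) := by
  have h := absSq3 a b 0 α β 0
  simpa using h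

private lemma abs3_le (a b c : ℝ) (ha : 0 ≤ a) (hb : 0 ≤ b) (hc : 0 ≤ c) (α β γ : ℝ) :
    Norm.norm ((a:ℂ) * Complex.exp (Complex.I * (α:ℂ)) + (b:ℂ) * Complex.exp (Complex.I * (β:ℂ)) +
      (c:ℂ) * Complex.exp (Complex.I * (γ:ℂ))) ≤ a + b + c := by
  calc Norm.norm (_ + _ + _) ≤ Norm.norm ((a:ℂ) * Complex.exp (Complex.I * (α:ℂ)) + (b:ℂ) * Complex.exp (Complex.I * (β:ℂ))) + Norm.norm ((c:ℂ) * Complex.exp (Complex.I * (γ:ℂ))) := norm_add_le _ _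
    _ ≤ Norm.norm ((a:ℂ) * Complex.exp (Complex.I * (α:ℂ))) + Norm.norm ((b:ℂ) * Complex.exp (Complex.I * (β:ℂ))) + Norm.norm ((c:ℂ) * Complex.exp (Complex.I * (γ:ℂ))) := by
        gcongr
        exact norm_add_le _ _
    _ = a + b + c := by
        simp [mul_comm Complex.I, Complex.norm_exp_ofReal_mul_I, abs_of_nonneg, ha, hb, hc]


private lemma hasDerivAt_cos_lin (a b x : ℝ) :
    HasDerivAt (fun y : ℝ => Real.cos (a*y + b)) (-(a * Real.sin (a*x+b))) x := by
  have h1 : HasDerivAt (fun y : ℝ => a*y + b) a x := by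
    simpa using ((hasDerivAt_id x).const_mul a).add_const b
  have h2 := (Real.hasDerivAt_cos (a*x+b)).comp x h1
  refine h2.congr_deriv ?_
  ring

private lemma Ncos_ge (n : ℕ) (hn : 2 ≤ n) : (n:ℝ) - 2 ≤ (n:ℝ) * Real.cos (π / n) := by
  rcases eq_or_lt_of_le hn with h | h
  · rw [← h]; norm_num [Real.cos_pi_div_two]
  · have hn3 : (3:ℝ) ≤ (n:ℝ) := by exact_mod_cast h
    have hnpos : (0:ℝ) < n := by linarith
    set s := Real.sin (π/(2*(n:ℝ))) with hs
    have hhalf : s ≤ π/(2*n) := Real.sin_le (by positivity)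
    have hsin0 : 0 ≤ s := by
      apply Real.sin_nonneg_of_nonneg_of_le_pi (by positivity)
      have h25 : π/(2*(n:ℝ)) ≤ π/2 := by gcongr <;> linarith [Real.pi_pos]
      linarith [Real.pi_pos]
    have hcos : Real.cos (π/(n:ℝ)) = 1 - 2 * s^2 := by
      rw [show π/(n:ℝ) = 2*(π/(2*n)) by ring, Real.cos_two_mul']
      have := Real.sin_sq_add_cos_sq (π/(2*(n:ℝ)))
      linarith
    have key : 2*(n:ℝ)*s^2 ≤ 2 := by
      have h1 : s^2 ≤ (π/(2*(n:ℝ)))^2 := by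
        apply pow_le_pow_left₀ hsin0 hhalf
      calc 2*(n:ℝ)*s^2 ≤ 2*(n:ℝ)*(π/(2*(n:ℝ)))^2 := by gcongr
        _ = π^2/(2*(n:ℝ)) := by field_simp
        _ ≤ π^2/(2*3) := by gcongr <;> nlinarith [Real.pi_pos]
        _ ≤ 2 := by nlinarith [Real.pi_lt_d2, Real.pi_pos]
    have hfin : (n:ℝ) * Real.cos (π/(n:ℝ)) = (n:ℝ) - 2*(n:ℝ)*s^2 := by rw [hcos]; ring
    linarith

private lemma cos_mul_pi_div_le (n : ℕ) (hn : 0 < n) (s : ℝ) (h1 : 1 ≤ s) (h2 : s ≤ n) :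
    Real.cos (s * (π/(n:ℝ))) ≤ Real.cos (π/(n:ℝ)) := by
  have hnR : (0:ℝ) < n := by exact_mod_cast hn
  have hπn : 0 < π/(n:ℝ) := by positivity
  have hnpi : (n:ℝ)*(π/(n:ℝ)) = π := by field_simp
  apply Real.cos_le_cos_of_nonneg_of_le_pi hπn.le
  · nlinarith
  · nlinarith

private lemma odd_cos (n : ℕ) (hn : 0 < n) (m : ℤ) (hm : Odd m) :
    Real.cos ((m:ℝ) * (π / n)) ≤ Real.cos (π / n) := by
  have h2n : (0:ℤ) < 2*(n:ℤ) := by positivity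
  set r : ℤ := m % (2*(n:ℤ)) with hrdef
  have hr0 : 0 ≤ r := Int.emod_nonneg m (by omega)
  have hrlt : r < 2*n := Int.emod_lt_of_pos m h2n
  have hmq : m = 2*(n:ℤ) * (m / (2*(n:ℤ))) + r := (Int.mul_ediv_add_emod m (2*n)).symm
  set q : ℤ := m / (2*(n:ℤ)) with hq
  have hrodd : Odd r := by
    rcases hm with ⟨j, hj⟩
    refine ⟨j - (n:ℤ)*q, ?_⟩
    have : (2:ℤ)*(n:ℤ)*q = 2*((n:ℤ)*q) := by ring
    linarith [hj, hmq]
  have hr1 : 1 ≤ r := by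
    rcases hrodd with ⟨j, hj⟩; omega
  have hnR : (0:ℝ) < (n:ℝ) := by exact_mod_cast hn
  have hcast : (m:ℝ) * (π/(n:ℝ)) = (r:ℝ)*(π/(n:ℝ)) + (q:ℝ) * (2*π) := by
    have hm' : (m:ℝ) = 2*(n:ℝ)*(q:ℝ) + (r:ℝ) := by exact_mod_cast hmq
    rw [hm']; field_simp; ring
  rw [hcast, Real.cos_add_int_mul_two_pi]
  have hr1R : (1:ℝ) ≤ (r:ℝ) := by exact_mod_cast hr1
  rcases le_or_gt (r:ℝ) (n:ℝ) with h | h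
  · exact cos_mul_pi_div_le n hn _ hr1R h
  · have hrlt' : (r:ℝ) ≤ 2*(n:ℝ) - 1 := by
      have : r ≤ 2*(n:ℤ) - 1 := by omega
      exact_mod_cast this
    have h2nr : (r:ℝ)*(π/(n:ℝ)) = 2*π - (2*(n:ℝ) - (r:ℝ))*(π/(n:ℝ)) := by field_simp; ring
    rw [h2nr, Real.cos_two_pi_sub]
    exact cos_mul_pi_div_le n hn _ (by linarith) (by linarith)


private lemma sin_factor_core (a b : ℝ) :
    Real.sin (2*(a+b)) + Real.sin (2*a) + Real.sin (2*b)
      = 4 * Real.sin (a+b) * Real.cos a * Real.cos b := by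
  rw [Real.sin_two_mul, Real.sin_two_mul, Real.sin_two_mul, Real.sin_add, Real.cos_add]
  linear_combination (-2*Real.sin a*Real.cos a)*(Real.sin_sq_add_cos_sq b)
    + (-2*Real.sin b*Real.cos b)*(Real.sin_sq_add_cos_sq a)

lemma sin_factor (K L ψ x : ℝ) :
    Real.sin ((K+L)*x) + Real.sin (K*x + ψ) + Real.sin (L*x - ψ)
      = 4 * Real.sin ((K+L)*x/2) * Real.cos (K*x/2 + ψ/2) * Real.cos (L*x/2 - ψ/2) := by
  have := sin_factor_core (K*x/2 + ψ/2) (L*x/2 - ψ/2)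
  rw [show 2*((K*x/2 + ψ/2)+(L*x/2 - ψ/2)) = (K+L)*x by ring,
      show 2*(K*x/2 + ψ/2) = K*x + ψ by ring,
      show 2*(L*x/2 - ψ/2) = L*x - ψ by ring,
      show (K*x/2 + ψ/2)+(L*x/2 - ψ/2) = (K+L)*x/2 by ring] at this
  exact this

noncomputable def Dfun (k l : ℕ) (x : ℝ) : ℝ :=
  2*(k:ℝ)*(l:ℝ)*(1 - Real.cos (((k:ℝ)+(l:ℝ)) * x))
  + 2*(l:ℝ)*((k:ℝ)+(l:ℝ))*(Real.cos (π/((k:ℝ)+(l:ℝ))) - Real.cos ((k:ℝ)*x + π/((k:ℝ)+(l:ℝ))))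
  + 2*(k:ℝ)*((k:ℝ)+(l:ℝ))*(Real.cos (π/((k:ℝ)+(l:ℝ))) - Real.cos ((l:ℝ)*x - π/((k:ℝ)+(l:ℝ))))



lemma Dfun_hasDeriv (k l : ℕ) (x : ℝ) :
    HasDerivAt (Dfun k l)
      (2*(k:ℝ)*(l:ℝ)*((k:ℝ)+(l:ℝ)) *
        (Real.sin (((k:ℝ)+(l:ℝ))*x) + Real.sin ((k:ℝ)*x + π/((k:ℝ)+(l:ℝ)))
          + Real.sin ((l:ℝ)*x - π/((k:ℝ)+(l:ℝ))))) x := by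
  set K : ℝ := (k:ℝ)
  set L : ℝ := (l:ℝ)
  set ψ : ℝ := π/((k:ℝ)+(l:ℝ)) with hψ
  have hA : HasDerivAt (fun y : ℝ => Real.cos ((K+L)*y)) (-((K+L) * Real.sin ((K+L)*x))) x := by
    simpa using hasDerivAt_cos_lin (K+L) 0 x
  have hB := hasDerivAt_cos_lin K ψ x
  have hC : HasDerivAt (fun y : ℝ => Real.cos (L*y - ψ)) (-(L * Real.sin (L*x - ψ))) x := by
    simpa [sub_eq_add_neg] using hasDerivAt_cos_lin L (-ψ) x
  have h1 := (((hasDerivAt_const x (1:ℝ)).sub hA).const_mul (2*K*L)).add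
    ((((hasDerivAt_const x (Real.cos ψ)).sub hB).const_mul (2*L*(K+L))).add
      (((hasDerivAt_const x (Real.cos ψ)).sub hC).const_mul (2*K*(K+L))))
  have heq : (fun y : ℝ => 2*K*L*(1 - Real.cos ((K+L)*y)) +
      (2*L*(K+L)*(Real.cos ψ - Real.cos (K*y + ψ)) + 2*K*(K+L)*(Real.cos ψ - Real.cos (L*y - ψ))))
      = Dfun k l := by
    funext y; simp only [Dfun]; ring
  rw [← heq]
  refine h1.congr_deriv ?_
  ring

lemma D_nonneg_crit (k l : ℕ) (hk : 0 < k) (hl : 0 < l) (x : ℝ)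
    (hcrit : Real.sin (((k:ℝ)+(l:ℝ))*x) + Real.sin ((k:ℝ)*x + π/((k:ℝ)+(l:ℝ)))
      + Real.sin ((l:ℝ)*x - π/((k:ℝ)+(l:ℝ))) = 0) :
    0 ≤ Dfun k l x := by
  have hK : (1:ℝ) ≤ (k:ℝ) := by exact_mod_cast hk
  have hL : (1:ℝ) ≤ (l:ℝ) := by exact_mod_cast hl
  set K : ℝ := (k:ℝ) with hKdef
  set L : ℝ := (l:ℝ) with hLdef
  set ψ : ℝ := π/(K+L) with hψdef
  have hNR : ((k+l : ℕ):ℝ) = K + L := by push_cast; ring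
  have hNpos : (0:ℝ) < K + L := by linarith
  have hNcos : (K+L) - 2 ≤ (K+L) * Real.cos ψ := by
    have := Ncos_ge (k+l) (by omega)
    rwa [hNR] at this
  have hfact := sin_factor K L ψ x
  rw [hcrit] at hfact
  have hzero : Real.sin ((K+L)*x/2) = 0 ∨ Real.cos (K*x/2 + ψ/2) = 0 ∨ Real.cos (L*x/2 - ψ/2) = 0 := by
    rcases mul_eq_zero.mp hfact.symm with h | h
    · rcases mul_eq_zero.mp h with h' | h'
      · rcases mul_eq_zero.mp h' with h'' | h''
        · norm_num at h''
        · exact Or.inl h''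
      · exact Or.inr (Or.inl h')
    · exact Or.inr (Or.inr h)
  have cos_le_one' : ∀ y : ℝ, Real.cos y ≤ 1 := Real.cos_le_one
  rcases hzero with h | h | h
  · -- sin((K+L)x/2) = 0
    obtain ⟨n, hn⟩ := Real.sin_eq_zero_iff.mp h
    have hNx2 : (K+L)*x = 2*(n:ℝ)*π := by linarith
    have hcosNx : Real.cos ((K+L)*x) = 1 := by
      rw [show (K+L)*x = (n:ℝ)*(2*π) by linarith, Real.cos_int_mul_two_pi]
    have hLK : Real.cos (L*x - ψ) = Real.cos (K*x + ψ) := by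
      rw [show L*x - ψ = (n:ℝ)*(2*π) - (K*x + ψ) by linear_combination hNx2,
        Real.cos_int_mul_two_pi_sub]
    have hxval : x = 2*(n:ℝ)*π/(K+L) := by field_simp; linarith
    have hc : Real.cos (K*x + ψ) ≤ Real.cos ψ := by
      have harg : K*x + ψ = ((2*n*(k:ℤ)+1 : ℤ):ℝ) * (π/((k+l:ℕ):ℝ)) := by
        rw [hxval, hψdef, hNR]
        push_cast
        field_simp
        ring
      have := odd_cos (k+l) (by omega) (2*n*(k:ℤ)+1) ⟨n*(k:ℤ), by ring⟩
      rw [← harg] at this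
      rwa [hNR] at this
    have h1 : 0 ≤ 2*L*(K+L)*(Real.cos ψ - Real.cos (K*x+ψ)) := by
      apply mul_nonneg (by positivity) (by linarith)
    have h2 : 0 ≤ 2*K*(K+L)*(Real.cos ψ - Real.cos (L*x-ψ)) := by
      apply mul_nonneg (by positivity) (by rw [hLK]; linarith)
    simp only [Dfun, ← hKdef, ← hLdef, ← hψdef, hcosNx]
    linarith
  · -- cos(Kx/2 + ψ/2) = 0
    obtain ⟨n, hn⟩ := Real.cos_eq_zero_iff.mp h
    have hKx : Real.cos (K*x + ψ) = -1 := by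
      rw [show K*x + ψ = π + (n:ℝ)*(2*π) by linear_combination 2*hn,
        Real.cos_add_int_mul_two_pi, Real.cos_pi]
    have h1 : 0 ≤ 2*K*L*(1 - Real.cos ((K+L)*x)) := by
      apply mul_nonneg (by positivity) (by linarith [cos_le_one' ((K+L)*x)])
    have h2 : 2*K*(K+L)*(Real.cos ψ - Real.cos (L*x-ψ)) ≥ 2*K*(K+L)*(Real.cos ψ - 1) := by
      apply mul_le_mul_of_nonneg_left (by linarith [cos_le_one' (L*x-ψ)]) (by positivity)
    have h3 : 0 ≤ 2*L*(K+L)*(Real.cos ψ + 1) + 2*K*(K+L)*(Real.cos ψ - 1) := by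
      have hmul := mul_le_mul_of_nonneg_left hNcos (by positivity : (0:ℝ) ≤ 2*(K+L))
      nlinarith [hNpos, hK, hL]
    simp only [Dfun, ← hKdef, ← hLdef, ← hψdef, hKx]
    linarith
  · -- cos(Lx/2 - ψ/2) = 0
    obtain ⟨n, hn⟩ := Real.cos_eq_zero_iff.mp h
    have hLx : Real.cos (L*x - ψ) = -1 := by
      rw [show L*x - ψ = π + (n:ℝ)*(2*π) by linear_combination 2*hn,
        Real.cos_add_int_mul_two_pi, Real.cos_pi]
    have h1 : 0 ≤ 2*K*L*(1 - Real.cos ((K+L)*x)) := by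
      apply mul_nonneg (by positivity) (by linarith [cos_le_one' ((K+L)*x)])
    have h2 : 2*L*(K+L)*(Real.cos ψ - Real.cos (K*x+ψ)) ≥ 2*L*(K+L)*(Real.cos ψ - 1) := by
      apply mul_le_mul_of_nonneg_left (by linarith [cos_le_one' (K*x+ψ)]) (by positivity)
    have h3 : 0 ≤ 2*K*(K+L)*(Real.cos ψ + 1) + 2*L*(K+L)*(Real.cos ψ - 1) := by
      have hmul := mul_le_mul_of_nonneg_left hNcos (by positivity : (0:ℝ) ≤ 2*(K+L))
      nlinarith [hNpos, hK, hL]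
    simp only [Dfun, ← hKdef, ← hLdef, ← hψdef, hLx]
    linarith

lemma D_nonneg (k l : ℕ) (hk : 0 < k) (hl : 0 < l) (x : ℝ) : 0 ≤ Dfun k l x := by
  have hK : (1:ℝ) ≤ (k:ℝ) := by exact_mod_cast hk
  have hL : (1:ℝ) ≤ (l:ℝ) := by exact_mod_cast hl
  have hper : Function.Periodic (Dfun k l) (2*π) := by
    intro y
    have e1 : ((k:ℝ)+(l:ℝ))*(y+2*π) = ((k:ℝ)+(l:ℝ))*y + ((k+l : ℤ):ℝ)*(2*π) := by push_cast; ring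
    have e2 : (k:ℝ)*(y+2*π) + π/((k:ℝ)+(l:ℝ)) = ((k:ℝ)*y + π/((k:ℝ)+(l:ℝ))) + ((k:ℤ):ℝ)*(2*π) := by
      push_cast; ring
    have e3 : (l:ℝ)*(y+2*π) - π/((k:ℝ)+(l:ℝ)) = ((l:ℝ)*y - π/((k:ℝ)+(l:ℝ))) + ((l:ℤ):ℝ)*(2*π) := by
      push_cast; ring
    simp only [Dfun, e1, e2, e3, Real.cos_add_int_mul_two_pi]
  have hcont : Continuous (Dfun k l) := by unfold Dfun; fun_prop
  have hD0 : Dfun k l 0 = 0 := by simp [Dfun]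
  obtain ⟨x₀, hx₀, hmin⟩ := isCompact_Icc.exists_isMinOn
    (Set.nonempty_Icc.mpr (by positivity : (0:ℝ) ≤ 2*π)) hcont.continuousOn
  have key : 0 ≤ Dfun k l x₀ := by
    rcases eq_or_lt_of_le hx₀.1 with h0 | h0
    · rw [← h0, hD0]
    · rcases eq_or_lt_of_le hx₀.2 with h2 | h2
      · have hD2 : Dfun k l (2*π) = 0 := by
          have := hper 0
          simpa [hD0] using this
        rw [h2, hD2]
      · have hloc : IsLocalMin (Dfun k l) x₀ := hmin.isLocalMin (Icc_mem_nhds h0 h2)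
        have hd := hloc.deriv_eq_zero
        rw [(Dfun_hasDeriv k l x₀).deriv] at hd
        have hcoef : (0:ℝ) < 2*(k:ℝ)*(l:ℝ)*((k:ℝ)+(l:ℝ)) := by positivity
        have hsum : Real.sin (((k:ℝ)+(l:ℝ))*x₀) + Real.sin ((k:ℝ)*x₀ + π/((k:ℝ)+(l:ℝ)))
            + Real.sin ((l:ℝ)*x₀ - π/((k:ℝ)+(l:ℝ))) = 0 := by
          rcases mul_eq_zero.mp hd with h | h
          · exact absurd h hcoef.ne'
          · exact h
        exact D_nonneg_crit k l hk hl x₀ hsum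
  obtain ⟨y, hy, hxy⟩ := hper.exists_mem_Ico₀ (by positivity) x
  rw [hxy]
  exact le_trans key (isMinOn_iff.mp hmin y ⟨hy.1, hy.2.le⟩)

lemma theta_mem (k l : ℕ) (hk : 0 < k) (hl : 0 < l) :
    0 < π/(2*((k:ℝ)+(l:ℝ))) ∧ π/(2*((k:ℝ)+(l:ℝ))) ≤ π/2 ∧ 0 ≤ Real.cos (π/(2*((k:ℝ)+(l:ℝ)))) := by
  have hK : (1:ℝ) ≤ (k:ℝ) := by exact_mod_cast hk
  have hL : (1:ℝ) ≤ (l:ℝ) := by exact_mod_cast hl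
  have h1 : 0 < π/(2*((k:ℝ)+(l:ℝ))) := by positivity
  have h2 : π/(2*((k:ℝ)+(l:ℝ))) ≤ π/2 := by
    rw [div_le_div_iff₀ (by positivity) (by norm_num)]
    nlinarith [Real.pi_pos]
  exact ⟨h1, h2, Real.cos_nonneg_of_mem_Icc ⟨by linarith, h2⟩⟩

lemma ext_bound (k l : ℕ) (hk : 0 < k) (hl : 0 < l) (c : ℝ) (hc : 0 ≤ c)
    (s₁ s₂ s₃ α β γ x : ℝ)
    (h₁ : s₁ = c*(l:ℝ)) (h₂ : s₂ = c*((k:ℝ)+(l:ℝ))) (h₃ : s₃ = c*(k:ℝ))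
    (hβ : β = π/((k:ℝ)+(l:ℝ))) (hα : α = -((k:ℝ)*x)) (hγ : γ = (l:ℝ)*x) :
    Norm.norm ((s₁:ℂ) * Complex.exp (Complex.I * (α:ℂ)) + (s₂:ℂ) * Complex.exp (Complex.I * (β:ℂ)) +
      (s₃:ℂ) * Complex.exp (Complex.I * (γ:ℂ)))
      ≤ 2*c*((k:ℝ)+(l:ℝ)) * Real.cos (π/(2*((k:ℝ)+(l:ℝ)))) := by
  have hK : (1:ℝ) ≤ (k:ℝ) := by exact_mod_cast hk
  have hL : (1:ℝ) ≤ (l:ℝ) := by exact_mod_cast hl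
  obtain ⟨ht1, ht2, ht3⟩ := theta_mem k l hk hl
  apply sq_le_imp (norm_nonneg _) (by positivity)
  rw [absSq3]
  have e1 : Real.cos (α - β) = Real.cos ((k:ℝ)*x + π/((k:ℝ)+(l:ℝ))) := by
    rw [show α - β = -((k:ℝ)*x + π/((k:ℝ)+(l:ℝ))) by rw [hα, hβ]; ring, Real.cos_neg]
  have e2 : Real.cos (α - γ) = Real.cos (((k:ℝ)+(l:ℝ))*x) := by
    rw [show α - γ = -(((k:ℝ)+(l:ℝ))*x) by rw [hα, hγ]; ring, Real.cos_neg]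
  have e3 : Real.cos (β - γ) = Real.cos ((l:ℝ)*x - π/((k:ℝ)+(l:ℝ))) := by
    rw [show β - γ = -((l:ℝ)*x - π/((k:ℝ)+(l:ℝ))) by rw [hβ, hγ]; ring, Real.cos_neg]
  rw [e1, e2, e3, h₁, h₂, h₃]
  have hcos2 : Real.cos (π/((k:ℝ)+(l:ℝ))) = 2 * Real.cos (π/(2*((k:ℝ)+(l:ℝ))))^2 - 1 := by
    rw [← Real.cos_two_mul]
    congr 1
    have hNne : ((k:ℝ)+(l:ℝ)) ≠ 0 := by positivity
    field_simp
  have hD := D_nonneg k l hk hl x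
  have hsq := sq_nonneg c
  have hident : (2*c*((k:ℝ)+(l:ℝ)) * Real.cos (π/(2*((k:ℝ)+(l:ℝ)))))^2
      - ((c*(l:ℝ))^2+(c*((k:ℝ)+(l:ℝ)))^2+(c*(k:ℝ))^2
        + 2*(c*(l:ℝ))*(c*((k:ℝ)+(l:ℝ)))*Real.cos ((k:ℝ)*x + π/((k:ℝ)+(l:ℝ)))
        + 2*(c*(l:ℝ))*(c*(k:ℝ))*Real.cos (((k:ℝ)+(l:ℝ))*x)
        + 2*(c*((k:ℝ)+(l:ℝ)))*(c*(k:ℝ))*Real.cos ((l:ℝ)*x - π/((k:ℝ)+(l:ℝ))))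
      = c^2 * Dfun k l x := by
    simp only [Dfun]
    linear_combination (-2*c^2*((k:ℝ)+(l:ℝ))^2) * hcos2
  nlinarith [mul_nonneg hsq hD]

lemma F0_lower (k l : ℕ) (hk : 0 < k) (hl : 0 < l)
    (r₁ r₂ r₃ : ℝ) (hr₁ : 0 < r₁) (hr₂ : 0 < r₂) (hr₃ : 0 < r₃)
    (t : ℝ) (ht0 : 0 ≤ t) (ht1 : t ≤ π / ((k:ℝ) + (l:ℝ))) :
    (r₁ + r₂ + r₃) * Real.cos (t/2) ≤ Norm.norm
        ((r₁ : ℂ) * Complex.exp (Complex.I * ((-(k : ℝ) * (0:ℝ) : ℝ) : ℂ)) +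
         (r₂ : ℂ) * Complex.exp (Complex.I * (t : ℂ)) +
         (r₃ : ℂ) * Complex.exp (Complex.I * (((l:ℝ) * (0:ℝ) : ℝ) : ℂ))) := by
  have hK : (1:ℝ) ≤ (k:ℝ) := by exact_mod_cast hk
  have hL : (1:ℝ) ≤ (l:ℝ) := by exact_mod_cast hl
  have htpi : t/2 ≤ π/2 := by
    have h2 : π/((k:ℝ)+(l:ℝ)) ≤ π := by
      rw [div_le_iff₀ (by positivity)]
      nlinarith [Real.pi_pos]
    linarith
  have hct2 : 0 ≤ Real.cos (t/2) := Real.cos_nonneg_of_mem_Icc ⟨by linarith, htpi⟩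
  apply sq_le_imp (by positivity) (norm_nonneg _)
  rw [absSq3]
  have e1 : Real.cos (-(k:ℝ) * (0:ℝ) - t) = Real.cos t := by
    rw [show -(k:ℝ) * (0:ℝ) - t = -t by ring, Real.cos_neg]
  have e2 : Real.cos (-(k:ℝ) * (0:ℝ) - (l:ℝ) * (0:ℝ)) = 1 := by
    rw [show -(k:ℝ) * (0:ℝ) - (l:ℝ) * (0:ℝ) = 0 by ring, Real.cos_zero]
  have e3 : Real.cos (t - (l:ℝ) * (0:ℝ)) = Real.cos t := by
    rw [show t - (l:ℝ) * (0:ℝ) = t by ring]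
  rw [e1, e2, e3]
  have hct : Real.cos t = 2 * Real.cos (t/2)^2 - 1 := by
    rw [← Real.cos_two_mul]
    congr 1
    ring
  have hsq : 0 ≤ (1 - Real.cos (t/2)^2) * (r₁+r₃-r₂)^2 := by
    have : Real.cos (t/2) ≤ 1 := Real.cos_le_one _
    have h2 : Real.cos (t/2)^2 ≤ 1 := by nlinarith
    nlinarith [sq_nonneg (r₁+r₃-r₂)]
  have hident : r₁^2+r₂^2+r₃^2 + 2*r₁*r₂*Real.cos t + 2*r₁*r₃*1 + 2*r₂*r₃*Real.cos t
      = ((r₁+r₂+r₃)*Real.cos (t/2))^2 + (1 - Real.cos (t/2)^2)*(r₁+r₃-r₂)^2 := by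
    linear_combination (2*r₁*r₂ + 2*r₂*r₃)*hct
  linarith [hsq, hident]

lemma part1 (k l : ℕ) (hk : 0 < k) (hl : 0 < l)
    (r₁ r₂ r₃ : ℝ) (hr₁ : 0 < r₁) (hr₂ : 0 < r₂) (hr₃ : 0 < r₃)
    (t : ℝ) (ht0 : 0 ≤ t) (ht1 : t ≤ π / ((k:ℝ) + (l:ℝ))) :
    (⨆ x : ℝ, Norm.norm
        ((r₁ : ℂ) * Complex.exp (Complex.I * ((-(k : ℝ) * x : ℝ) : ℂ)) +
         (r₂ : ℂ) * Complex.exp (Complex.I * (t : ℂ)) +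
         (r₃ : ℂ) * Complex.exp (Complex.I * (((l:ℝ) * x : ℝ) : ℂ)))) ≥
      (r₁ + r₂ + r₃) * Real.cos (π / (2 * ((k:ℝ) + (l:ℝ)))) := by
  have hK : (1:ℝ) ≤ (k:ℝ) := by exact_mod_cast hk
  have hL : (1:ℝ) ≤ (l:ℝ) := by exact_mod_cast hl
  obtain ⟨hθ1, hθ2, hθ3⟩ := theta_mem k l hk hl
  have hbdd : BddAbove (Set.range (fun x : ℝ => Norm.norm
        ((r₁ : ℂ) * Complex.exp (Complex.I * ((-(k : ℝ) * x : ℝ) : ℂ)) +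
         (r₂ : ℂ) * Complex.exp (Complex.I * (t : ℂ)) +
         (r₃ : ℂ) * Complex.exp (Complex.I * (((l:ℝ) * x : ℝ) : ℂ))))) := by
    refine ⟨r₁ + r₂ + r₃, ?_⟩
    rintro y ⟨x, rfl⟩
    exact abs3_le r₁ r₂ r₃ hr₁.le hr₂.le hr₃.le _ _ _
  have h0 := le_ciSup hbdd 0
  have hF0 := F0_lower k l hk hl r₁ r₂ r₃ hr₁ hr₂ hr₃ t ht0 ht1
  have hcc : Real.cos (π / (2 * ((k:ℝ) + (l:ℝ)))) ≤ Real.cos (t/2) := by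
    apply Real.cos_le_cos_of_nonneg_of_le_pi (by linarith)
    · linarith [Real.pi_pos]
    · rw [le_div_iff₀ (by positivity)] at *
      nlinarith [ht1, Real.pi_pos]
  have : (r₁ + r₂ + r₃) * Real.cos (π / (2 * ((k:ℝ) + (l:ℝ)))) ≤ (r₁+r₂+r₃) * Real.cos (t/2) := by
    apply mul_le_mul_of_nonneg_left hcc (by positivity)
  exact le_trans (le_trans this hF0) h0

lemma key_lower (k l : ℕ) (hk : 0 < k) (hl : 0 < l) (hkl : Nat.Coprime k l)
    (s₁ s₂ s₃ : ℝ) (hs₁ : 0 < s₁) (hs₂ : 0 < s₂) (hs₃ : 0 < s₃) (u₁ u₂ u₃ : ℝ) :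
    (s₁ + s₂ + s₃) * Real.cos (π / (2 * ((k:ℝ) + (l:ℝ)))) ≤
      ⨆ x : ℝ, Norm.norm
          ((s₁ : ℂ) * Complex.exp (Complex.I * ((u₁ + -(k : ℝ) * x : ℝ) : ℂ)) +
           (s₂ : ℂ) * Complex.exp (Complex.I * ((u₂ : ℝ) : ℂ)) +
           (s₃ : ℂ) * Complex.exp (Complex.I * ((u₃ + (l:ℝ) * x : ℝ) : ℂ))) := by
  have hK : (1:ℝ) ≤ (k:ℝ) := by exact_mod_cast hk
  have hL : (1:ℝ) ≤ (l:ℝ) := by exact_mod_cast hl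
  have hNpos : (0:ℝ) < (k:ℝ)+(l:ℝ) := by linarith
  have hNne : ((k:ℝ)+(l:ℝ)) ≠ 0 := hNpos.ne'
  obtain ⟨hθ1, hθ2, hθ3⟩ := theta_mem k l hk hl
  -- Bezout
  have hco : Nat.Coprime l (k+l) := Nat.coprime_add_self_right.mpr hkl.symm
  obtain ⟨a, b, hab⟩ := Nat.isCoprime_iff_coprime.mpr hco
  have habR : (a:ℝ)*(l:ℝ) + (b:ℝ)*((k:ℝ)+(l:ℝ)) = 1 := by exact_mod_cast hab
  set α : ℝ := ((l:ℝ)*u₁ + (k:ℝ)*u₃)/((k:ℝ)+(l:ℝ)) with hα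
  set v : ℝ := (u₂ - α)*((k:ℝ)+(l:ℝ))/(2*π) with hv
  set j₀ : ℤ := round v with hj₀
  set m : ℤ := j₀ * a with hm
  set xm : ℝ := (u₁ - u₃)/((k:ℝ)+(l:ℝ)) + 2*π*(m:ℝ)/((k:ℝ)+(l:ℝ)) with hxm
  set β : ℝ := α + 2*π*(l:ℝ)*(m:ℝ)/((k:ℝ)+(l:ℝ)) with hβ
  have h12 : |v - (j₀:ℝ)| ≤ 1/2 := by rw [hj₀]; exact abs_sub_round v
  clear_value α v j₀ m xm β
  -- rewriting the function value at xm
  have step1 : Complex.exp (Complex.I * ((u₁ + -(k : ℝ) * xm : ℝ) : ℂ))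
      = Complex.exp (Complex.I * (β:ℂ)) := by
    have hre : u₁ + -(k:ℝ)*xm = β - (m:ℝ)*(2*π) := by
      rw [hβ, hxm, hα]; field_simp; ring
    rw [hre, show Complex.I * ((β - (m:ℝ)*(2*π) : ℝ):ℂ)
        = Complex.I * (β:ℂ) - (m:ℂ)*(2*(π:ℂ)*Complex.I) by push_cast; ring,
      Complex.exp_sub, Complex.exp_int_mul_two_pi_mul_I, div_one]
  have step2 : Complex.exp (Complex.I * ((u₃ + (l:ℝ) * xm : ℝ) : ℂ))
      = Complex.exp (Complex.I * (β:ℂ)) := by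
    have hre : u₃ + (l:ℝ)*xm = β := by
      rw [hβ, hxm, hα]; field_simp; ring
    rw [hre]
  have hLa : (l:ℝ)*(m:ℝ) = (j₀:ℝ) - (j₀:ℝ)*(b:ℝ)*((k:ℝ)+(l:ℝ)) := by
    have : (m:ℝ) = (j₀:ℝ)*(a:ℝ) := by rw [hm]; push_cast; ring
    rw [this]
    linear_combination (j₀:ℝ)*habR
  have hangle : Real.cos (π/((k:ℝ)+(l:ℝ))) ≤ Real.cos (β - u₂) := by
    have hz : β - u₂ = (2*π/((k:ℝ)+(l:ℝ)))*((j₀:ℝ) - v) + ((-(j₀*b) : ℤ):ℝ)*(2*π) := by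
      rw [hβ]
      push_cast
      rw [hv]
      field_simp
      linear_combination (2*π)*hLa
    rw [hz, Real.cos_add_int_mul_two_pi]
    have habs : |(2*π/((k:ℝ)+(l:ℝ)))*((j₀:ℝ) - v)| ≤ π/((k:ℝ)+(l:ℝ)) := by
      rw [abs_mul, abs_of_pos (by positivity : (0:ℝ) < 2*π/((k:ℝ)+(l:ℝ)))]
      have h12' : |(j₀:ℝ) - v| ≤ 1/2 := by rw [abs_sub_comm]; exact h12
      calc 2*π/((k:ℝ)+(l:ℝ)) * |(j₀:ℝ) - v| ≤ 2*π/((k:ℝ)+(l:ℝ)) * (1/2) := by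
            apply mul_le_mul_of_nonneg_left h12' (by positivity)
        _ = π/((k:ℝ)+(l:ℝ)) := by ring
    rw [← Real.cos_abs ((2*π/((k:ℝ)+(l:ℝ)))*((j₀:ℝ) - v))]
    apply Real.cos_le_cos_of_nonneg_of_le_pi (abs_nonneg _)
    · rw [div_le_iff₀ hNpos]; nlinarith [Real.pi_pos]
    · exact habs
  -- value at xm
  have hbdd : BddAbove (Set.range (fun x : ℝ => Norm.norm
          ((s₁ : ℂ) * Complex.exp (Complex.I * ((u₁ + -(k : ℝ) * x : ℝ) : ℂ)) +
           (s₂ : ℂ) * Complex.exp (Complex.I * ((u₂ : ℝ) : ℂ)) +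
           (s₃ : ℂ) * Complex.exp (Complex.I * ((u₃ + (l:ℝ) * x : ℝ) : ℂ))))) := by
    refine ⟨s₁ + s₂ + s₃, ?_⟩
    rintro y ⟨x, rfl⟩
    exact abs3_le s₁ s₂ s₃ hs₁.le hs₂.le hs₃.le _ _ _
  have hsup := le_ciSup hbdd xm
  have hval : Norm.norm
          ((s₁ : ℂ) * Complex.exp (Complex.I * ((u₁ + -(k : ℝ) * xm : ℝ) : ℂ)) +
           (s₂ : ℂ) * Complex.exp (Complex.I * ((u₂ : ℝ) : ℂ)) +
           (s₃ : ℂ) * Complex.exp (Complex.I * ((u₃ + (l:ℝ) * xm : ℝ) : ℂ)))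
      = Norm.norm (((s₁+s₃ : ℝ):ℂ) * Complex.exp (Complex.I * (β:ℂ))
          + (s₂:ℂ) * Complex.exp (Complex.I * (u₂:ℂ))) := by
    rw [step1, step2]
    congr 1
    push_cast
    ring
  have hcos2 : Real.cos (π/((k:ℝ)+(l:ℝ))) = 2 * Real.cos (π/(2*((k:ℝ)+(l:ℝ))))^2 - 1 := by
    rw [← Real.cos_two_mul]
    congr 1
    field_simp
  have hstep : (s₁ + s₂ + s₃) * Real.cos (π / (2 * ((k:ℝ) + (l:ℝ)))) ≤ Norm.norm
          ((s₁ : ℂ) * Complex.exp (Complex.I * ((u₁ + -(k : ℝ) * xm : ℝ) : ℂ)) +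
           (s₂ : ℂ) * Complex.exp (Complex.I * ((u₂ : ℝ) : ℂ)) +
           (s₃ : ℂ) * Complex.exp (Complex.I * ((u₃ + (l:ℝ) * xm : ℝ) : ℂ))) := by
    apply sq_le_imp (mul_nonneg (by positivity) hθ3) (norm_nonneg _)
    rw [hval, absSq2]
    rw [show s₁+s₂+s₃ = (s₁+s₃)+s₂ by ring]
    apply quad_bound (s₁+s₃) s₂ _ _ (by linarith [hs₁, hs₃]) hs₂.le
      (by nlinarith [Real.cos_le_one (π/(2*((k:ℝ)+(l:ℝ)))), Real.neg_one_le_cos (π/(2*((k:ℝ)+(l:ℝ))))])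
      (by rw [← hcos2]; exact hangle)
  exact le_trans hstep hsup

lemma part2_fwd (k l : ℕ) (hk : 0 < k) (hl : 0 < l)
    (r₁ r₂ r₃ : ℝ) (hr₁ : 0 < r₁) (hr₂ : 0 < r₂) (hr₃ : 0 < r₃)
    (t : ℝ) (ht0 : 0 ≤ t) (ht1 : t ≤ π / ((k:ℝ) + (l:ℝ)))
    (heq : (⨆ x : ℝ, Norm.norm
        ((r₁ : ℂ) * Complex.exp (Complex.I * ((-(k : ℝ) * x : ℝ) : ℂ)) +
         (r₂ : ℂ) * Complex.exp (Complex.I * (t : ℂ)) +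
         (r₃ : ℂ) * Complex.exp (Complex.I * (((l:ℝ) * x : ℝ) : ℂ)))) =
        (r₁ + r₂ + r₃) * Real.cos (π / (2 * ((k:ℝ) + (l:ℝ))))) :
    (∃ c : ℝ, 0 < c ∧ r₁ = c * (l:ℝ) ∧ r₂ = c * ((k:ℝ) + (l:ℝ)) ∧ r₃ = c * (k:ℝ)) ∧
      t = π / ((k:ℝ) + (l:ℝ)) := by
  have hK : (1:ℝ) ≤ (k:ℝ) := by exact_mod_cast hk
  have hL : (1:ℝ) ≤ (l:ℝ) := by exact_mod_cast hl
  have hNpos : (0:ℝ) < (k:ℝ)+(l:ℝ) := by linarith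
  obtain ⟨hθ1, hθ2, hθ3⟩ := theta_mem k l hk hl
  have hθπ : π/(2*((k:ℝ)+(l:ℝ))) ≤ π := by linarith [Real.pi_pos]
  have hbdd : BddAbove (Set.range (fun x : ℝ => Norm.norm
        ((r₁ : ℂ) * Complex.exp (Complex.I * ((-(k : ℝ) * x : ℝ) : ℂ)) +
         (r₂ : ℂ) * Complex.exp (Complex.I * (t : ℂ)) +
         (r₃ : ℂ) * Complex.exp (Complex.I * (((l:ℝ) * x : ℝ) : ℂ))))) := by
    refine ⟨r₁ + r₂ + r₃, ?_⟩
    rintro y ⟨x, rfl⟩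
    exact abs3_le r₁ r₂ r₃ hr₁.le hr₂.le hr₃.le _ _ _
  have hsup0 := le_ciSup hbdd 0
  rw [heq] at hsup0
  have hF0 := F0_lower k l hk hl r₁ r₂ r₃ hr₁ hr₂ hr₃ t ht0 ht1
  have htpi2 : t/2 ≤ π/2 := by
    have h2 : π/((k:ℝ)+(l:ℝ)) ≤ π := by
      rw [div_le_iff₀ hNpos]; nlinarith [Real.pi_pos]
    linarith
  have hcc : Real.cos (π / (2 * ((k:ℝ) + (l:ℝ)))) ≤ Real.cos (t/2) := by
    apply Real.cos_le_cos_of_nonneg_of_le_pi (by linarith) hθπ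
    rw [le_div_iff₀ (by positivity)] at *
    nlinarith [ht1, Real.pi_pos]
  have hc : Real.cos (t/2) = Real.cos (π / (2 * ((k:ℝ) + (l:ℝ)))) := by
    apply le_antisymm _ hcc
    nlinarith [le_trans hF0 hsup0]
  have ht2 : t/2 = π / (2 * ((k:ℝ) + (l:ℝ))) :=
    Real.injOn_cos ⟨by linarith, by linarith⟩ ⟨hθ1.le, hθπ⟩ hc
  have htv : t = π / ((k:ℝ) + (l:ℝ)) := by
    rw [eq_div_iff hNpos.ne']
    rw [div_eq_div_iff (by norm_num) (by positivity)] at ht2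
    linarith
  refine ⟨?_, htv⟩
  -- equality at 0 and r₂ = r₁ + r₃
  have hcθ1 : Real.cos (π / (2 * ((k:ℝ) + (l:ℝ)))) < 1 := by
    have h := Real.strictAntiOn_cos (Set.mem_Icc.mpr ⟨le_refl 0, Real.pi_pos.le⟩)
      (Set.mem_Icc.mpr ⟨hθ1.le, hθπ⟩) hθ1
    simpa using h
  have hF0le : Norm.norm
        ((r₁ : ℂ) * Complex.exp (Complex.I * ((-(k : ℝ) * (0:ℝ) : ℝ) : ℂ)) +
         (r₂ : ℂ) * Complex.exp (Complex.I * (t : ℂ)) +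
         (r₃ : ℂ) * Complex.exp (Complex.I * (((l:ℝ) * (0:ℝ) : ℝ) : ℂ)))
      = (r₁ + r₂ + r₃) * Real.cos (π / (2 * ((k:ℝ) + (l:ℝ)))) := by
    apply le_antisymm hsup0
    rw [← hc]
    exact hF0
  have e1 : Real.cos (-(k:ℝ) * (0:ℝ) - t) = Real.cos t := by
    rw [show -(k:ℝ) * (0:ℝ) - t = -t by ring, Real.cos_neg]
  have e2 : Real.cos (-(k:ℝ) * (0:ℝ) - (l:ℝ) * (0:ℝ)) = 1 := by
    rw [show -(k:ℝ) * (0:ℝ) - (l:ℝ) * (0:ℝ) = 0 by ring, Real.cos_zero]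
  have e3 : Real.cos (t - (l:ℝ) * (0:ℝ)) = Real.cos t := by
    rw [show t - (l:ℝ) * (0:ℝ) = t by ring]
  have hF0sq : ((r₁ + r₂ + r₃) * Real.cos (π / (2 * ((k:ℝ) + (l:ℝ)))))^2
      = r₁^2+r₂^2+r₃^2 + 2*r₁*r₂*Real.cos t + 2*r₁*r₃*1 + 2*r₂*r₃*Real.cos t := by
    rw [← hF0le, absSq3, e1, e2, e3]
  have hct : Real.cos t = 2 * Real.cos (t/2)^2 - 1 := by
    rw [← Real.cos_two_mul]; congr 1; ring
  have hident : r₁^2+r₂^2+r₃^2 + 2*r₁*r₂*Real.cos t + 2*r₁*r₃*1 + 2*r₂*r₃*Real.cos t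
      = ((r₁+r₂+r₃)*Real.cos (t/2))^2 + (1 - Real.cos (t/2)^2)*(r₁+r₃-r₂)^2 := by
    linear_combination (2*r₁*r₂ + 2*r₂*r₃)*hct
  -- local max argument
  have e1x : ∀ x : ℝ, Real.cos (-(k:ℝ) * x - t) = Real.cos ((k:ℝ)*x + t) := fun x => by
    rw [show -(k:ℝ) * x - t = -((k:ℝ)*x + t) by ring, Real.cos_neg]
  have e2x : ∀ x : ℝ, Real.cos (-(k:ℝ) * x - (l:ℝ) * x) = Real.cos (((k:ℝ)+(l:ℝ))*x) := fun x => by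
    rw [show -(k:ℝ) * x - (l:ℝ) * x = -(((k:ℝ)+(l:ℝ))*x) by ring, Real.cos_neg]
  have e3x : ∀ x : ℝ, Real.cos (t - (l:ℝ) * x) = Real.cos ((l:ℝ)*x - t) := fun x => by
    rw [show t - (l:ℝ) * x = -((l:ℝ)*x - t) by ring, Real.cos_neg]
  have hFx : ∀ x : ℝ, (Norm.norm
        ((r₁ : ℂ) * Complex.exp (Complex.I * ((-(k : ℝ) * x : ℝ) : ℂ)) +
         (r₂ : ℂ) * Complex.exp (Complex.I * (t : ℂ)) +
         (r₃ : ℂ) * Complex.exp (Complex.I * (((l:ℝ) * x : ℝ) : ℂ))))^2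
      = r₁^2+r₂^2+r₃^2 + 2*r₁*r₂*Real.cos ((k:ℝ)*x + t)
        + 2*r₁*r₃*Real.cos (((k:ℝ)+(l:ℝ))*x) + 2*r₂*r₃*Real.cos ((l:ℝ)*x - t) := fun x => by
    rw [absSq3, e1x x, e2x x, e3x x]
  have hGle : ∀ x : ℝ, r₁^2+r₂^2+r₃^2 + 2*r₁*r₂*Real.cos ((k:ℝ)*x + t)
        + 2*r₁*r₃*Real.cos (((k:ℝ)+(l:ℝ))*x) + 2*r₂*r₃*Real.cos ((l:ℝ)*x - t)
      ≤ ((r₁ + r₂ + r₃) * Real.cos (π / (2 * ((k:ℝ) + (l:ℝ)))))^2 := by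
    intro x
    rw [← hFx x]
    have h1 := le_ciSup hbdd x
    rw [heq] at h1
    have h2 : (0:ℝ) ≤ Norm.norm
        ((r₁ : ℂ) * Complex.exp (Complex.I * ((-(k : ℝ) * x : ℝ) : ℂ)) +
         (r₂ : ℂ) * Complex.exp (Complex.I * (t : ℂ)) +
         (r₃ : ℂ) * Complex.exp (Complex.I * (((l:ℝ) * x : ℝ) : ℂ))) := norm_nonneg _
    exact pow_le_pow_left₀ h2 h1 2
  have hG0 : r₁^2+r₂^2+r₃^2 + 2*r₁*r₂*Real.cos ((k:ℝ)*(0:ℝ) + t)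
        + 2*r₁*r₃*Real.cos (((k:ℝ)+(l:ℝ))*(0:ℝ)) + 2*r₂*r₃*Real.cos ((l:ℝ)*(0:ℝ) - t)
      = ((r₁ + r₂ + r₃) * Real.cos (π / (2 * ((k:ℝ) + (l:ℝ)))))^2 := by
    rw [hF0sq, show (k:ℝ)*(0:ℝ) + t = t by ring, show ((k:ℝ)+(l:ℝ))*(0:ℝ) = 0 by ring,
      show (l:ℝ)*(0:ℝ) - t = -t by ring, Real.cos_zero, Real.cos_neg]
  clear heq hbdd hsup0 hF0 hF0le hFx
  rw [hc] at hident
  have hPQ : r₂ = r₁ + r₃ := by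
    have hzero : (1 - Real.cos (π / (2 * ((k:ℝ) + (l:ℝ))))^2)*(r₁+r₃-r₂)^2 = 0 := by
      linarith [hF0sq, hident]
    have hpos : 0 < 1 - Real.cos (π / (2 * ((k:ℝ) + (l:ℝ))))^2 := by
      nlinarith [hθ3, hcθ1]
    have h2 : (r₁+r₃-r₂)^2 = 0 := by
      rcases mul_eq_zero.mp hzero with h | h
      · linarith
      · exact h
    have h3 := (pow_eq_zero_iff two_ne_zero).mp h2
    linarith
  have hmax : IsLocalMax (fun x : ℝ => r₁^2+r₂^2+r₃^2 + 2*r₁*r₂*Real.cos ((k:ℝ)*x + t)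
        + 2*r₁*r₃*Real.cos (((k:ℝ)+(l:ℝ))*x) + 2*r₂*r₃*Real.cos ((l:ℝ)*x - t)) 0 := by
    apply Filter.Eventually.of_forall
    intro x
    simp only []
    rw [hG0]
    exact hGle x
  have hB1 := (hasDerivAt_cos_lin (k:ℝ) t 0).const_mul (2*r₁*r₂)
  have hB2 : HasDerivAt (fun y : ℝ => Real.cos (((k:ℝ)+(l:ℝ))*y))
      (-(((k:ℝ)+(l:ℝ)) * Real.sin (((k:ℝ)+(l:ℝ))*(0:ℝ)))) 0 := by
    simpa using hasDerivAt_cos_lin ((k:ℝ)+(l:ℝ)) 0 0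
  have hB2' := hB2.const_mul (2*r₁*r₃)
  have hB3 : HasDerivAt (fun y : ℝ => Real.cos ((l:ℝ)*y - t))
      (-((l:ℝ) * Real.sin ((l:ℝ)*(0:ℝ) - t))) 0 := by
    simpa [sub_eq_add_neg] using hasDerivAt_cos_lin (l:ℝ) (-t) 0
  have hB3' := hB3.const_mul (2*r₂*r₃)
  have hder := (((hasDerivAt_const (0:ℝ) (r₁^2+r₂^2+r₃^2)).add hB1).add hB2').add hB3'
  have hd0 := hmax.deriv_eq_zero
  replace hd0 := hder.deriv.symm.trans hd0
  rw [show (k:ℝ)*(0:ℝ)+t = t by ring, show (l:ℝ)*(0:ℝ)-t = -t by ring,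
    show ((k:ℝ)+(l:ℝ))*(0:ℝ) = (0:ℝ) by ring, Real.sin_zero, Real.sin_neg] at hd0
  have hst : 0 < Real.sin t := by
    rw [htv]
    apply Real.sin_pos_of_pos_of_lt_pi (by positivity)
    rw [div_lt_iff₀ hNpos]
    nlinarith [Real.pi_pos]
  have hkr : r₁ * (k:ℝ) = r₃ * (l:ℝ) := by
    have hfac : (2*r₂*Real.sin t)*(r₃*(l:ℝ) - r₁*(k:ℝ)) = 0 := by linear_combination hd0
    rcases mul_eq_zero.mp hfac with h | h
    · nlinarith [hst]
    · linarith
  have hlne : ((l:ℝ)) ≠ 0 := by positivity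
  refine ⟨r₁/(l:ℝ), by positivity, ?_, ?_, ?_⟩
  · field_simp
  · field_simp
    linear_combination ((l:ℝ))*hPQ - hkr
  · field_simp
    linear_combination -hkr

theorem stmt19 (k l : ℕ) (hk : 0 < k) (hl : 0 < l) (hkl : Nat.Coprime k l)
    (r₁ r₂ r₃ : ℝ) (hr₁ : 0 < r₁) (hr₂ : 0 < r₂) (hr₃ : 0 < r₃)
    (t : ℝ) (ht : t ∈ Set.Icc 0 (π / (k + l))) :
    -- the inequality
    (⨆ x : ℝ, Norm.norm
        ((r₁ : ℂ) * Complex.exp (Complex.I * ((-(k : ℝ) * x : ℝ) : ℂ)) +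
         (r₂ : ℂ) * Complex.exp (Complex.I * (t : ℂ)) +
         (r₃ : ℂ) * Complex.exp (Complex.I * ((l * x : ℝ) : ℂ)))) ≥
      (r₁ + r₂ + r₃) * Real.cos (π / (2 * (k + l))) ∧
    -- case of equality
    ((⨆ x : ℝ, Norm.norm
        ((r₁ : ℂ) * Complex.exp (Complex.I * ((-(k : ℝ) * x : ℝ) : ℂ)) +
         (r₂ : ℂ) * Complex.exp (Complex.I * (t : ℂ)) +
         (r₃ : ℂ) * Complex.exp (Complex.I * ((l * x : ℝ) : ℂ)))) =
        (r₁ + r₂ + r₃) * Real.cos (π / (2 * (k + l))) ↔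
      (∃ c : ℝ, 0 < c ∧ r₁ = c * l ∧ r₂ = c * (k + l) ∧ r₃ = c * k) ∧
        t = π / (k + l)) ∧
    -- consequently, the Sidon constant of {−k, 0, l} is sec(π/2(k+l))
    IsLeast {C : ℝ | ∀ s₁ s₂ s₃ : ℝ, 0 < s₁ → 0 < s₂ → 0 < s₃ → ∀ u₁ u₂ u₃ : ℝ,
        s₁ + s₂ + s₃ ≤ C * ⨆ x : ℝ, Norm.norm
          ((s₁ : ℂ) * Complex.exp (Complex.I * ((u₁ + -(k : ℝ) * x : ℝ) : ℂ)) +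
           (s₂ : ℂ) * Complex.exp (Complex.I * ((u₂ : ℝ) : ℂ)) +
           (s₃ : ℂ) * Complex.exp (Complex.I * ((u₃ + l * x : ℝ) : ℂ)))}
      (1 / Real.cos (π / (2 * (k + l)))) := by
  have hK : (1:ℝ) ≤ (k:ℝ) := by exact_mod_cast hk
  have hL : (1:ℝ) ≤ (l:ℝ) := by exact_mod_cast hl
  have hNpos : (0:ℝ) < (k:ℝ)+(l:ℝ) := by linarith
  have hlpos : (0:ℝ) < (l:ℝ) := by linarith
  have hkpos : (0:ℝ) < (k:ℝ) := by linarith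
  obtain ⟨hθ1, hθ2, hθ3⟩ := theta_mem k l hk hl
  have hθlt : π/(2*((k:ℝ)+(l:ℝ))) < π/2 := by
    rw [div_lt_div_iff₀ (by positivity) (by norm_num)]
    nlinarith [Real.pi_pos]
  have hcos_pos : 0 < Real.cos (π/(2*((k:ℝ)+(l:ℝ)))) :=
    Real.cos_pos_of_mem_Ioo ⟨by linarith, hθlt⟩
  obtain ⟨ht0, ht1⟩ := ht
  refine ⟨part1 k l hk hl r₁ r₂ r₃ hr₁ hr₂ hr₃ t ht0 ht1, ⟨?_, ?_⟩, ?_, ?_⟩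
  · -- equality forward
    intro heq
    exact part2_fwd k l hk hl r₁ r₂ r₃ hr₁ hr₂ hr₃ t ht0 ht1 heq
  · -- equality backward
    rintro ⟨⟨c, hc0, hc1, hc2, hc3⟩, htv⟩
    subst hc1 hc2 hc3 htv
    apply le_antisymm
    · apply ciSup_le
      intro x
      have hb := ext_bound k l hk hl c hc0.le (c*(l:ℝ)) (c*((k:ℝ)+(l:ℝ))) (c*(k:ℝ))
        (-(k:ℝ)*x) (π/((k:ℝ)+(l:ℝ))) ((l:ℝ)*x) x rfl rfl rfl rfl (by ring) rfl
      calc Norm.norm _ ≤ 2*c*((k:ℝ)+(l:ℝ)) * Real.cos (π/(2*((k:ℝ)+(l:ℝ)))) := hb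
        _ = (c*(l:ℝ) + c*((k:ℝ)+(l:ℝ)) + c*(k:ℝ)) * Real.cos (π/(2*((k:ℝ)+(l:ℝ)))) := by ring
    · exact part1 k l hk hl (c*(l:ℝ)) (c*((k:ℝ)+(l:ℝ))) (c*(k:ℝ))
        (mul_pos hc0 hlpos) (mul_pos hc0 hNpos) (mul_pos hc0 hkpos)
        (π/((k:ℝ)+(l:ℝ))) (by positivity) (le_refl _)
  · -- membership
    intro s₁ s₂ s₃ hs₁ hs₂ hs₃ u₁ u₂ u₃
    have hkey := key_lower k l hk hl hkl s₁ s₂ s₃ hs₁ hs₂ hs₃ u₁ u₂ u₃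
    have h2 : s₁+s₂+s₃ = (1/Real.cos (π/(2*((k:ℝ)+(l:ℝ))))) * ((s₁+s₂+s₃)*Real.cos (π/(2*((k:ℝ)+(l:ℝ))))) := by
      field_simp
    rw [h2]
    exact mul_le_mul_of_nonneg_left hkey (by positivity)
  · -- lower bound
    intro C hC
    simp only [Set.mem_setOf_eq] at hC
    have h := hC (l:ℝ) ((k:ℝ)+(l:ℝ)) (k:ℝ) hlpos hNpos hkpos 0 (π/((k:ℝ)+(l:ℝ))) 0
    have hub : (⨆ x : ℝ, Norm.norm
          (((l:ℝ) : ℂ) * Complex.exp (Complex.I * (((0:ℝ) + -(k : ℝ) * x : ℝ) : ℂ)) +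
           (((k:ℝ)+(l:ℝ) : ℝ) : ℂ) * Complex.exp (Complex.I * ((π/((k:ℝ)+(l:ℝ)) : ℝ) : ℂ)) +
           ((k:ℝ) : ℂ) * Complex.exp (Complex.I * (((0:ℝ) + (l:ℝ) * x : ℝ) : ℂ))))
        ≤ 2*1*((k:ℝ)+(l:ℝ)) * Real.cos (π/(2*((k:ℝ)+(l:ℝ)))) := by
      apply ciSup_le
      intro x
      exact ext_bound k l hk hl 1 zero_le_one (l:ℝ) ((k:ℝ)+(l:ℝ)) (k:ℝ)
        ((0:ℝ) + -(k:ℝ)*x) (π/((k:ℝ)+(l:ℝ))) ((0:ℝ) + (l:ℝ)*x) x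
        (by ring) (by ring) (by ring) rfl (by ring) (by ring)
    have hlb := key_lower k l hk hl hkl (l:ℝ) ((k:ℝ)+(l:ℝ)) (k:ℝ) hlpos hNpos hkpos
      0 (π/((k:ℝ)+(l:ℝ))) 0
    set S := (⨆ x : ℝ, Norm.norm
          (((l:ℝ) : ℂ) * Complex.exp (Complex.I * (((0:ℝ) + -(k : ℝ) * x : ℝ) : ℂ)) +
           (((k:ℝ)+(l:ℝ) : ℝ) : ℂ) * Complex.exp (Complex.I * ((π/((k:ℝ)+(l:ℝ)) : ℝ) : ℂ)) +
           ((k:ℝ) : ℂ) * Complex.exp (Complex.I * (((0:ℝ) + (l:ℝ) * x : ℝ) : ℂ)))) with hS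
    have hSpos : 0 < S := by
      apply lt_of_lt_of_le _ hlb
      positivity
    have hC0 : 0 ≤ C := by
      by_contra hneg
      push_neg at hneg
      have hcs : C * S < 0 := mul_neg_of_neg_of_pos hneg hSpos
      have : (0:ℝ) < (l:ℝ) + ((k:ℝ)+(l:ℝ)) + (k:ℝ) := by linarith
      linarith
    have h3 : C * S ≤ C * (2*1*((k:ℝ)+(l:ℝ)) * Real.cos (π/(2*((k:ℝ)+(l:ℝ))))) :=
      mul_le_mul_of_nonneg_left hub hC0
    rw [div_le_iff₀ hcos_pos]
    nlinarith [h, h3, hNpos]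
end
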